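/- arXiv:1911.04691 — 8 statements merged into one kernel-verified Lean document; each statement's English description precedes it below -/
import Mathlib

section
/- Let (X,T) be a topological dynamical system, d ∈ ℕ, and k ∈ ℕ with k ≥ 1. Then AP^[d](X,T) = AP^[d](X,T^k), i.e. a pair (x,y) is regionally proximal of order d along arithmetic progressions for T if and only if it is so for T^k. -/
/-- The regionally proximal relation of order `d` along arithmetic progressions:
`(x, y) ∈ AP T d` iff for every `δ > 0` there are `x', y'` and `n : ℤ` with
`dist x x' < δ`, `dist y y' < δ` and `dist (T^{i n} x') (T^{i n} y') < δ` for `1 ≤ i ≤ d`. -/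
def AP {X : Type*} [MetricSpace X] (T : Equiv.Perm X) (d : ℕ) : Set (X × X) :=
  {p | ∀ δ : ℝ, 0 < δ → ∃ x' y' : X, ∃ n : ℤ,
    dist p.1 x' < δ ∧ dist p.2 y' < δ ∧
    ∀ i : ℕ, 1 ≤ i → i ≤ d →
      dist ((T ^ ((i : ℤ) * n)) x') ((T ^ ((i : ℤ) * n)) y') < δ}

/-!
Passing from `T` to `T ^ k` only restricts the admissible steps `n` to multiples of `k`, so one
inclusion is immediate. For the other, round a step `n` up to a multiple: `k q = n + r` with
`0 ≤ r < k`. Then `(T ^ k) ^ (i q) = T ^ (i r) ∘ T ^ (i n)` with `0 ≤ i r < d k`, and the finitely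
many maps `T ^ j`, `j < d k`, are uniformly equicontinuous on the compact space `X`, so closeness
of `T ^ (i n) x'` and `T ^ (i n) y'` is inherited by their images under `T ^ (i r)`.
-/

lemma Int.exists_mul_eq_add_lt (n : ℤ) {k : ℕ} (hk : 0 < k) :
    ∃ q : ℤ, ∃ r : ℕ, r < k ∧ k * q = n + r := by
  have hk' : (0 : ℤ) < k := by exact_mod_cast hk
  refine ⟨-(-n / k), ((-n) % k).toNat, ?_, ?_⟩
  · have := Int.emod_lt_of_pos (-n) hk'
    omega
  · have := Int.emod_nonneg (-n) hk'.ne'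
    have := Int.mul_ediv_add_emod (-n) k
    rw [Int.toNat_of_nonneg ‹_›]
    linarith

lemma pow_zpow_mul_eq_of_mul_eq_add {G : Type*} [Group G] (g : G) {k r : ℕ} {n q : ℤ}
    (h : k * q = n + r) (i : ℕ) :
    (g ^ k) ^ ((i : ℤ) * q) = g ^ (i * r) * g ^ ((i : ℤ) * n) := by
  rw [← zpow_natCast g k, ← zpow_mul, ← zpow_natCast g (i * r), ← zpow_add]
  congr 1
  push_cast
  linear_combination (i : ℤ) * h

section Perm

variable {X : Type*}

lemma uniformEquicontinuous_pow_of_continuous [UniformSpace X] [CompactSpace X]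
    {T : Equiv.Perm X} (hT : Continuous T) (N : ℕ) :
    UniformEquicontinuous fun j : Fin N ↦ ⇑(T ^ (j : ℕ)) :=
  uniformEquicontinuous_finite.mpr fun j ↦
    CompactSpace.uniformContinuous_of_continuous (T.coe_pow j ▸ hT.iterate j)

variable [MetricSpace X]

lemma AP_pow_subset (T : Equiv.Perm X) (d k : ℕ) : AP (T ^ k) d ⊆ AP T d := by
  rintro ⟨x, y⟩ h δ hδ
  obtain ⟨x', y', m, hx, hy, hm⟩ := h δ hδ
  refine ⟨x', y', k * m, hx, hy, fun i hi hid ↦ ?_⟩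
  have := hm i hi hid
  rwa [← zpow_natCast, ← zpow_mul, mul_left_comm] at this

lemma AP_subset_AP_pow [CompactSpace X] {T : Equiv.Perm X} (hT : Continuous T) (d : ℕ) {k : ℕ}
    (hk : 0 < k) : AP T d ⊆ AP (T ^ k) d := by
  rintro ⟨x, y⟩ h δ hδ
  obtain ⟨ε, hε, hTε⟩ := Metric.uniformEquicontinuous_iff.mp
    (uniformEquicontinuous_pow_of_continuous hT (d * k)) δ hδ
  obtain ⟨x', y', n, hx, hy, hn⟩ := h (min ε δ) (lt_min hε hδ)
  obtain ⟨q, r, hrk, hqr⟩ := Int.exists_mul_eq_add_lt n hk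
  refine ⟨x', y', q, hx.trans_le (min_le_right _ _), hy.trans_le (min_le_right _ _),
    fun i hi hid ↦ ?_⟩
  have hir : i * r < d * k := (Nat.mul_le_mul_right r hid).trans_lt (by nlinarith)
  rw [pow_zpow_mul_eq_of_mul_eq_add T hqr]
  exact hTε _ _ ((hn i hi hid).trans_le (min_le_left _ _)) ⟨i * r, hir⟩

end Perm

theorem ap_pow_eq_general {X : Type*} [MetricSpace X] [CompactSpace X]
    (T : Equiv.Perm X) (hT : Continuous T)
    (d k : ℕ) (hk : 1 ≤ k) :
    AP T d = AP (T ^ k) d :=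
  (AP_subset_AP_pow hT d hk).antisymm (AP_pow_subset T d k)

/-- For a topological dynamical system `(X, T)` (compact metric space `X`,
homeomorphism `T`), `d ∈ ℕ` and `k ≥ 1`, one has `AP^[d](X, T) = AP^[d](X, T^k)`. -/
theorem ap_pow_eq {X : Type*} [MetricSpace X] [CompactSpace X]
    (T : Equiv.Perm X) (hT : Continuous T) (hT' : Continuous T.symm)
    (d k : ℕ) (hk : 1 ≤ k) :
    AP T d = AP (T ^ k) d :=
  ap_pow_eq_general T hT d k hk
end

section
/- Let α ∈ ℝ be irrational and set a(n) = n(n−1)/2. If y ∈ 𝕋 = ℝ/ℤ satisfies 3y ≠ 0 in 𝕋, then it is NOT the case that for every ε > 0 there exists n ∈ ℕ with ‖nα‖ < ε, ‖2nα‖ < ε, ‖y − a(n)α‖ < ε and ‖y − a(2n)α‖ < ε, where ‖·‖ denotes the distance to 0 in 𝕋 and nα, a(n)α are taken mod 1. -/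
/-! Since `a (2n) = 4 a(n) + n`, we have
`3 y = 4 (y - a(n) α) - (y - a(2n) α) - n α` in `𝕋`, so `‖3 y‖ < 6 ε` whenever `n` is an
`ε`-return; taking `ε = ‖3 y‖ / 6` gives a contradiction. -/

theorem Nat.choose_two_two_mul (n : ℕ) : (2 * n).choose 2 = 4 * n.choose 2 + n := by
  have h : ((2 * n).choose 2 : ℚ) = 4 * n.choose 2 + n := by
    rw [Nat.cast_choose_two, Nat.cast_choose_two]; push_cast; ring
  exact_mod_cast h

theorem AddCircle.coe_choose_two_two_mul_mul {p : ℝ} (n : ℕ) (α : ℝ) :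
    ((((2 * n).choose 2 : ℝ) * α : ℝ) : AddCircle p)
      = 4 • (((n.choose 2 : ℝ) * α : ℝ) : AddCircle p) + (((n : ℝ) * α : ℝ) : AddCircle p) := by
  rw [← AddCircle.coe_nsmul, ← AddCircle.coe_add, Nat.choose_two_two_mul]
  push_cast; ring_nf

theorem norm_three_nsmul_le {G : Type*} [SeminormedAddCommGroup G] (y a c : G) :
    ‖3 • y‖ ≤ 4 * ‖y - a‖ + ‖y - (4 • a + c)‖ + ‖c‖ := by
  have key : 3 • y = 4 • (y - a) - (y - (4 • a + c)) - c := by abel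
  have h4 : ‖4 • (y - a)‖ ≤ 4 * ‖y - a‖ := by exact_mod_cast norm_nsmul_le (n := 4) (a := y - a)
  calc ‖3 • y‖ ≤ ‖4 • (y - a)‖ + ‖y - (4 • a + c)‖ + ‖c‖ := by
        rw [key]
        exact (norm_sub_le _ _).trans (by gcongr; exact norm_sub_le _ _)
    _ ≤ 4 * ‖y - a‖ + ‖y - (4 • a + c)‖ + ‖c‖ := by gcongr

theorem not_ap_return_general (α : ℝ) (y : AddCircle (1 : ℝ))
    (hy : 3 • y ≠ 0) :
    ¬ (∀ ε : ℝ, 0 < ε → ∃ n : ℕ, 0 < n ∧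
      ‖(((n : ℝ) * α : ℝ) : AddCircle (1 : ℝ))‖ < ε ∧
      ‖(((2 * n : ℝ) * α : ℝ) : AddCircle (1 : ℝ))‖ < ε ∧
      ‖y - ((((n * (n - 1) / 2 : ℕ) : ℝ) * α : ℝ) : AddCircle (1 : ℝ))‖ < ε ∧
      ‖y - ((((2 * n * (2 * n - 1) / 2 : ℕ) : ℝ) * α : ℝ) : AddCircle (1 : ℝ))‖ < ε) := by
  intro H
  have hpos : 0 < ‖3 • y‖ := norm_pos_iff.mpr hy
  obtain ⟨n, -, hn, -, hA, hB⟩ := H (‖3 • y‖ / 6) (by positivity)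
  rw [← Nat.choose_two_right] at hA
  rw [← Nat.choose_two_right, AddCircle.coe_choose_two_two_mul_mul] at hB
  have := norm_three_nsmul_le y (((n.choose 2 : ℝ) * α : ℝ) : AddCircle (1 : ℝ))
    (((n : ℝ) * α : ℝ) : AddCircle (1 : ℝ))
  linarith

/-- Let `α` be irrational, `a n = n (n - 1) / 2`. If `y ∈ 𝕋 = ℝ/ℤ` satisfies
`3 y ≠ 0` in `𝕋`, then it is NOT the case that for every `ε > 0` there is `n ∈ ℕ` (positive)
with `‖n α‖ < ε`, `‖2 n α‖ < ε`, `‖y - a n • α‖ < ε` and `‖y - a (2 n) • α‖ < ε`. -/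
theorem not_ap_return (α : ℝ) (hα : Irrational α) (y : AddCircle (1 : ℝ))
    (hy : 3 • y ≠ 0) :
    ¬ (∀ ε : ℝ, 0 < ε → ∃ n : ℕ, 0 < n ∧
      ‖(((n : ℝ) * α : ℝ) : AddCircle (1 : ℝ))‖ < ε ∧
      ‖(((2 * n : ℝ) * α : ℝ) : AddCircle (1 : ℝ))‖ < ε ∧
      ‖y - ((((n * (n - 1) / 2 : ℕ) : ℝ) * α : ℝ) : AddCircle (1 : ℝ))‖ < ε ∧
      ‖y - ((((2 * n * (2 * n - 1) / 2 : ℕ) : ℝ) * α : ℝ) : AddCircle (1 : ℝ))‖ < ε) :=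
  not_ap_return_general α y hy
end

section
/- Let π : (X,T) → (Y,T) be a proximal extension between two topological dynamical systems. Then for every d ∈ ℕ, AP^[d](X,T) ⊇ R_π = {(x,y) ∈ X × X : π(x) = π(y)}. In particular, if (X,T) is proximal (every pair of points of X is proximal), then AP^[d](X,T) = X × X for every d ∈ ℕ. -/
/-- `(x, y)` is a proximal pair: `inf_{n ∈ ℤ} dist (T^n x) (T^n y) = 0`. -/
def Proximal {X : Type*} [MetricSpace X] (T : Equiv.Perm X) (x y : X) : Prop :=
  ∀ ε : ℝ, 0 < ε → ∃ n : ℤ, dist ((T ^ n) x) ((T ^ n) y) < ε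

open Filter Topology

private lemma continuous_perm_pow {X : Type*} [MetricSpace X]
    (T : Equiv.Perm X) (hT : Continuous T) : ∀ n : ℕ, Continuous ⇑(T ^ n) := by
  intro n
  induction n with
  | zero => simpa [pow_zero, Equiv.Perm.coe_one] using continuous_id
  | succ n ih =>
      have h : ⇑(T ^ (n + 1)) = ⇑(T ^ n) ∘ ⇑T := by
        funext z
        simp [pow_succ, Equiv.Perm.mul_apply]
      rw [h]
      exact ih.comp hT

private lemma continuous_perm_zpow {X : Type*} [MetricSpace X]
    (T : Equiv.Perm X) (hT : Continuous T) (hT' : Continuous T.symm) :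
    ∀ t : ℤ, Continuous ⇑(T ^ t) := by
  intro t
  cases t with
  | ofNat n =>
      have h : (T ^ (Int.ofNat n)) = T ^ n := by
        simpa using zpow_natCast T n
      rw [h]
      exact continuous_perm_pow T hT n
  | negSucc n =>
      have h : (T ^ (Int.negSucc n)) = (T⁻¹) ^ (n + 1) := by
        rw [zpow_negSucc, inv_pow]
      rw [h]
      have h2 : Continuous ⇑(T⁻¹) := hT'
      exact continuous_perm_pow T⁻¹ h2 (n + 1)

/-- Key lemma: if `R` is a closed relation, invariant under `T` and `T⁻¹`, contained in the
proximal relation, then any pair related by `R` lies in `AP T d`. -/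
private lemma proximal_mem_AP {X : Type*} [MetricSpace X] [CompactSpace X]
    (T : Equiv.Perm X) (hT : Continuous T) (hT' : Continuous T.symm)
    (R : X → X → Prop)
    (hRc : IsClosed {p : X × X | R p.1 p.2})
    (hRi : ∀ a b, R a b → R (T a) (T b))
    (hRi' : ∀ a b, R a b → R (T.symm a) (T.symm b))
    (hRp : ∀ a b, R a b → Proximal T a b)
    (x y : X) (hxy : R x y) (d : ℕ) : (x, y) ∈ AP T d := by
  classical
  -- R is invariant under all integer powers of T
  have hRnat : ∀ (f : Equiv.Perm X), (∀ a b, R a b → R (f a) (f b)) →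
      ∀ (n : ℕ) (a b : X), R a b → R ((f ^ n) a) ((f ^ n) b) := by
    intro f hf n
    induction n with
    | zero => intro a b h; simpa [pow_zero, Equiv.Perm.coe_one] using h
    | succ n ih =>
        intro a b h
        have hz : ∀ z : X, (f ^ (n + 1)) z = (f ^ n) (f z) := by
          intro z; rw [pow_succ, Equiv.Perm.mul_apply]
        rw [hz a, hz b]
        exact ih _ _ (hf _ _ h)
  have hRz : ∀ (t : ℤ) (a b : X), R a b → R ((T ^ t) a) ((T ^ t) b) := by
    intro t a b h
    cases t with
    | ofNat n =>
        have he : (T ^ (Int.ofNat n)) = T ^ n := by simpa using zpow_natCast T n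
        rw [he]; exact hRnat T hRi n a b h
    | negSucc n =>
        have he : (T ^ (Int.negSucc n)) = (T⁻¹) ^ (n + 1) := by rw [zpow_negSucc, inv_pow]
        rw [he]
        exact hRnat T⁻¹ (fun a b h => hRi' a b h) (n + 1) a b h
  -- the "AP-orbit" of the pair (x, y) in the product space
  set P : ℤ → (Fin d → X × X) :=
    fun t i => ((T ^ ((((i : ℕ) : ℤ) + 1) * t)) x, (T ^ ((((i : ℕ) : ℤ) + 1) * t)) y) with hP
  set Orb : Set (Fin d → X × X) := Set.range P with hOrb
  -- applying the coordinate-wise powers map preserves the closure of the orbit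
  have hstep : ∀ (e : ℤ) (U : Fin d → X × X), U ∈ closure Orb →
      (fun (i : Fin d) => ((T ^ ((((i : ℕ) : ℤ) + 1) * e)) (U i).1,
                 (T ^ ((((i : ℕ) : ℤ) + 1) * e)) (U i).2)) ∈ closure Orb := by
    intro e U hU
    have hFc : Continuous (fun (W : Fin d → X × X) (i : Fin d) =>
        ((T ^ ((((i : ℕ) : ℤ) + 1) * e)) (W i).1,
         (T ^ ((((i : ℕ) : ℤ) + 1) * e)) (W i).2)) := by
      apply continuous_pi
      intro i
      exact ((continuous_perm_zpow T hT hT' _).comp ((continuous_apply i).fst)).prodMk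
        ((continuous_perm_zpow T hT hT' _).comp ((continuous_apply i).snd))
    have hFO : ∀ W ∈ Orb, (fun (i : Fin d) =>
        ((T ^ ((((i : ℕ) : ℤ) + 1) * e)) (W i).1,
         (T ^ ((((i : ℕ) : ℤ) + 1) * e)) (W i).2)) ∈ Orb := by
      rintro W ⟨t, rfl⟩
      refine ⟨t + e, ?_⟩
      funext i
      have hz : ∀ z : X, (T ^ ((((i : ℕ) : ℤ) + 1) * (t + e))) z
          = (T ^ ((((i : ℕ) : ℤ) + 1) * e)) ((T ^ ((((i : ℕ) : ℤ) + 1) * t)) z) := by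
        intro z
        have harith : ((((i : ℕ) : ℤ) + 1)) * (t + e)
            = ((((i : ℕ) : ℤ) + 1)) * e + ((((i : ℕ) : ℤ) + 1)) * t := by ring
        rw [harith, zpow_add, Equiv.Perm.mul_apply]
      simp only [hP]
      exact Prod.ext (hz x) (hz y)
    have h1 : (fun (i : Fin d) => ((T ^ ((((i : ℕ) : ℤ) + 1) * e)) (U i).1,
        (T ^ ((((i : ℕ) : ℤ) + 1) * e)) (U i).2))
        ∈ (fun (W : Fin d → X × X) (i : Fin d) =>
            ((T ^ ((((i : ℕ) : ℤ) + 1) * e)) (W i).1,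
             (T ^ ((((i : ℕ) : ℤ) + 1) * e)) (W i).2)) '' closure Orb :=
      Set.mem_image_of_mem _ hU
    have h2 := image_closure_subset_closure_image hFc h1
    refine closure_mono ?_ h2
    rintro _ ⟨W, hW, rfl⟩
    exact hFO W hW
  -- main induction: merge more and more coordinates
  have main : ∀ r : ℕ, r ≤ d → ∃ V : Fin d → X × X,
      V ∈ closure Orb ∧ (∀ i, R (V i).1 (V i).2) ∧
      (∀ i : Fin d, (i : ℕ) < r → (V i).1 = (V i).2) := by
    intro r
    induction r with
    | zero =>
        intro _
        refine ⟨P 0, subset_closure ⟨0, rfl⟩, ?_, ?_⟩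
        · intro i
          have h0 : P 0 i = (x, y) := by
            simp [hP, mul_zero, zpow_zero, Equiv.Perm.coe_one]
          rw [h0]
          exact hxy
        · intro i hi
          omega
    | succ r ih =>
        intro hrd
        obtain ⟨V, hVc, hVR, hVm⟩ := ih (by omega)
        have hrd' : r < d := by omega
        have hab : Proximal T (V ⟨r, hrd'⟩).1 (V ⟨r, hrd'⟩).2 := hRp _ _ (hVR _)
        have hmex : ∀ k : ℕ, ∃ mm : ℤ,
            dist ((T ^ mm) (V ⟨r, hrd'⟩).1) ((T ^ mm) (V ⟨r, hrd'⟩).2) < 1 / ((k : ℝ) + 1) := by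
          intro k; exact hab _ (by positivity)
        choose m hmlt using hmex
        have hppos : (0 : ℤ) < (r : ℤ) + 1 := by omega
        -- pigeonhole for residues mod r+1
        have hfreq : ∃ s : ℤ, ∃ᶠ k in atTop, m k % ((r : ℤ) + 1) = s := by
          by_contra hcon
          push_neg at hcon
          have hfin : ∀ s : ℤ, {k : ℕ | m k % ((r : ℤ) + 1) = s}.Finite := by
            intro s
            have hev : ∀ᶠ k in atTop, ¬ m k % ((r : ℤ) + 1) = s :=
              hcon s
            obtain ⟨N, hN⟩ := Filter.eventually_atTop.mp hev
            apply Set.Finite.subset (Set.finite_Iio N)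
            intro k hk
            by_contra hk'
            exact hN k (Nat.le_of_not_lt hk') hk
          have huniv : (Set.univ : Set ℕ).Finite := by
            have hsub : (Set.univ : Set ℕ) ⊆
                ⋃ s ∈ Finset.Ico (0 : ℤ) ((r : ℤ) + 1), {k : ℕ | m k % ((r : ℤ) + 1) = s} := by
              intro k _
              have h1 : m k % ((r : ℤ) + 1) ∈ Finset.Ico (0 : ℤ) ((r : ℤ) + 1) :=
                Finset.mem_Ico.mpr ⟨Int.emod_nonneg _ (by omega), Int.emod_lt_of_pos _ hppos⟩
              exact Set.mem_biUnion h1 rfl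
            exact Set.Finite.subset
              (Set.Finite.biUnion (Finset.Ico (0 : ℤ) ((r : ℤ) + 1)).finite_toSet
                (fun s _ => hfin s)) hsub
          exact Set.infinite_univ huniv
        obtain ⟨s, hs⟩ := hfreq
        obtain ⟨φ, hφmono, hφ⟩ := Filter.extraction_of_frequently_atTop hs
        set seq : ℕ → (Fin d → X × X) := fun k i =>
          ((T ^ ((((i : ℕ) : ℤ) + 1) * (m (φ k) / ((r : ℤ) + 1)))) (V i).1,
           (T ^ ((((i : ℕ) : ℤ) + 1) * (m (φ k) / ((r : ℤ) + 1)))) (V i).2) with hseq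
        have hseqmem : ∀ k, seq k ∈ closure Orb := fun k =>
          hstep (m (φ k) / ((r : ℤ) + 1)) V hVc
        obtain ⟨V', -, ψ, hψmono, hψt⟩ :=
          isCompact_univ.tendsto_subseq (fun k => Set.mem_univ (seq k))
        have hcoord : ∀ i : Fin d, Tendsto (fun k => seq (ψ k) i) atTop (𝓝 (V' i)) := by
          intro i
          exact tendsto_pi_nhds.mp hψt i
        have hc1 : ∀ i : Fin d, Tendsto (fun k => (seq (ψ k) i).1) atTop (𝓝 (V' i).1) :=
          fun i => (Continuous.tendsto continuous_fst _).comp (hcoord i)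
        have hc2 : ∀ i : Fin d, Tendsto (fun k => (seq (ψ k) i).2) atTop (𝓝 (V' i).2) :=
          fun i => (Continuous.tendsto continuous_snd _).comp (hcoord i)
        have hV'c : V' ∈ closure Orb :=
          isClosed_closure.mem_of_tendsto hψt
            (Filter.Eventually.of_forall (fun k => hseqmem (ψ k)))
        have hV'R : ∀ i, R (V' i).1 (V' i).2 := by
          intro i
          have hmem : ∀ k : ℕ, (seq (ψ k) i) ∈ {p : X × X | R p.1 p.2} := by
            intro k
            simp only [hseq]
            exact hRz _ _ _ (hVR i)
          exact hRc.mem_of_tendsto (hcoord i) (Filter.Eventually.of_forall hmem)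
        -- previously merged coordinates stay merged
        have hold : ∀ i : Fin d, (i : ℕ) < r → (V' i).1 = (V' i).2 := by
          intro i hi
          have heqf : (fun k => (seq (ψ k) i).1) = (fun k => (seq (ψ k) i).2) := by
            funext k
            simp only [hseq]
            rw [hVm i hi]
          have h1 := hc1 i
          rw [heqf] at h1
          exact tendsto_nhds_unique h1 (hc2 i)
        -- the new coordinate gets merged
        have hAten : Tendsto (fun k => (T ^ (m (φ (ψ k)))) (V ⟨r, hrd'⟩).1) atTop
            (𝓝 ((T ^ s) ((V' ⟨r, hrd'⟩).1))) := by
          have h0 := ((continuous_perm_zpow T hT hT' s).tendsto ((V' ⟨r, hrd'⟩).1)).comp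
            (hc1 ⟨r, hrd'⟩)
          refine h0.congr ?_
          intro k
          show (T ^ s) ((seq (ψ k) ⟨r, hrd'⟩).1) = (T ^ (m (φ (ψ k)))) (V ⟨r, hrd'⟩).1
          have h1 : (seq (ψ k) ⟨r, hrd'⟩).1
              = (T ^ (((r : ℤ) + 1) * (m (φ (ψ k)) / ((r : ℤ) + 1)))) (V ⟨r, hrd'⟩).1 := by
            simp only [hseq]
          rw [h1, ← Equiv.Perm.mul_apply, ← zpow_add]
          have h2 := Int.mul_ediv_add_emod (m (φ (ψ k))) ((r : ℤ) + 1)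
          have h3 : m (φ (ψ k)) % ((r : ℤ) + 1) = s := hφ (ψ k)
          rw [h3] at h2
          have hexp : s + ((r : ℤ) + 1) * (m (φ (ψ k)) / ((r : ℤ) + 1)) = m (φ (ψ k)) := by
            linarith
          rw [hexp]
        have hBten : Tendsto (fun k => (T ^ (m (φ (ψ k)))) (V ⟨r, hrd'⟩).2) atTop
            (𝓝 ((T ^ s) ((V' ⟨r, hrd'⟩).2))) := by
          have h0 := ((continuous_perm_zpow T hT hT' s).tendsto ((V' ⟨r, hrd'⟩).2)).comp
            (hc2 ⟨r, hrd'⟩)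
          refine h0.congr ?_
          intro k
          show (T ^ s) ((seq (ψ k) ⟨r, hrd'⟩).2) = (T ^ (m (φ (ψ k)))) (V ⟨r, hrd'⟩).2
          have h1 : (seq (ψ k) ⟨r, hrd'⟩).2
              = (T ^ (((r : ℤ) + 1) * (m (φ (ψ k)) / ((r : ℤ) + 1)))) (V ⟨r, hrd'⟩).2 := by
            simp only [hseq]
          rw [h1, ← Equiv.Perm.mul_apply, ← zpow_add]
          have h2 := Int.mul_ediv_add_emod (m (φ (ψ k))) ((r : ℤ) + 1)
          have h3 : m (φ (ψ k)) % ((r : ℤ) + 1) = s := hφ (ψ k)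
          rw [h3] at h2
          have hexp : s + ((r : ℤ) + 1) * (m (φ (ψ k)) / ((r : ℤ) + 1)) = m (φ (ψ k)) := by
            linarith
          rw [hexp]
        have hd0 : Tendsto (fun k =>
            dist ((T ^ (m (φ (ψ k)))) (V ⟨r, hrd'⟩).1) ((T ^ (m (φ (ψ k)))) (V ⟨r, hrd'⟩).2))
            atTop (𝓝 0) := by
          apply squeeze_zero (fun k => dist_nonneg) (fun k => ?_)
            tendsto_one_div_add_atTop_nhds_zero_nat
          have hlt := hmlt (φ (ψ k))
          have hk : k ≤ φ (ψ k) := le_trans hψmono.le_apply hφmono.le_apply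
          have hle : (1 : ℝ) / ((φ (ψ k) : ℝ) + 1) ≤ 1 / ((k : ℝ) + 1) := by
            apply one_div_le_one_div_of_le (by positivity)
            have : ((k : ℝ)) ≤ ((φ (ψ k) : ℝ)) := by exact_mod_cast hk
            linarith
          linarith
        have hdeq : dist ((T ^ s) ((V' ⟨r, hrd'⟩).1)) ((T ^ s) ((V' ⟨r, hrd'⟩).2)) = 0 :=
          tendsto_nhds_unique (hAten.dist hBten) hd0
        have hnew : (V' ⟨r, hrd'⟩).1 = (V' ⟨r, hrd'⟩).2 :=
          (T ^ s).injective (by rwa [dist_eq_zero] at hdeq)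
        refine ⟨V', hV'c, hV'R, ?_⟩
        intro i hi
        rcases Nat.lt_or_ge (i : ℕ) r with h | h
        · exact hold i h
        · have hv : (i : ℕ) = r := by omega
          have hii : i = ⟨r, hrd'⟩ := Fin.ext hv
          rw [hii]
          exact hnew
  -- conclusion
  obtain ⟨Vs, hVsc, -, hVsm⟩ := main d le_rfl
  intro δ hδ
  obtain ⟨g, hgO, hgd⟩ := Metric.mem_closure_iff.mp hVsc (δ / 2) (by linarith)
  obtain ⟨n, rfl⟩ := hgO
  refine ⟨x, y, n, by simpa using hδ, by simpa using hδ, ?_⟩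
  intro i hi1 hid
  set j : Fin d := ⟨i - 1, by omega⟩ with hj
  have hjv : (j : ℕ) = i - 1 := rfl
  have h0 : ((j : ℕ) : ℤ) + 1 = (i : ℤ) := by rw [hjv]; omega
  have hPj : P n j = ((T ^ ((i : ℤ) * n)) x, (T ^ ((i : ℤ) * n)) y) := by
    simp only [hP]
    rw [h0]
  have hcc : (Vs j).1 = (Vs j).2 := hVsm j j.isLt
  have hd1 : dist (Vs j) (P n j) ≤ dist Vs (P n) := dist_le_pi_dist Vs (P n) j
  have hcomp1 : dist (Vs j).1 (P n j).1 ≤ dist (Vs j) (P n j) := by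
    rw [Prod.dist_eq]; exact le_max_left _ _
  have hcomp2 : dist (Vs j).2 (P n j).2 ≤ dist (Vs j) (P n j) := by
    rw [Prod.dist_eq]; exact le_max_right _ _
  have hx1 : dist ((T ^ ((i : ℤ) * n)) x) (Vs j).1 < δ / 2 := by
    have h4 : (P n j).1 = (T ^ ((i : ℤ) * n)) x := by rw [hPj]
    rw [← h4, dist_comm]
    exact lt_of_le_of_lt (hcomp1.trans hd1) hgd
  have hy1 : dist (Vs j).1 ((T ^ ((i : ℤ) * n)) y) < δ / 2 := by
    have h4 : (P n j).2 = (T ^ ((i : ℤ) * n)) y := by rw [hPj]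
    rw [hcc, ← h4]
    exact lt_of_le_of_lt (hcomp2.trans hd1) hgd
  calc dist ((T ^ ((i : ℤ) * n)) x) ((T ^ ((i : ℤ) * n)) y)
      ≤ dist ((T ^ ((i : ℤ) * n)) x) (Vs j).1 + dist (Vs j).1 ((T ^ ((i : ℤ) * n)) y) :=
        dist_triangle _ _ _
    _ < δ / 2 + δ / 2 := by linarith
    _ = δ := by ring

/-- If `π : (X,T) → (Y,S)` is a proximal extension of t.d.s., then for every
`d ∈ ℕ` one has `R_π ⊆ AP^[d](X,T)`.  In particular if `(X,T)` is proximal then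
`AP^[d](X,T) = X × X` for every `d`. -/
theorem rpi_subset_ap_of_proximal_ext {X Y : Type*}
    [MetricSpace X] [CompactSpace X] [MetricSpace Y] [CompactSpace Y]
    (T : Equiv.Perm X) (hT : Continuous T) (hT' : Continuous T.symm)
    (S : Equiv.Perm Y) (hS : Continuous S) (hS' : Continuous S.symm)
    (π : X → Y) (hπc : Continuous π) (hπs : Function.Surjective π)
    (hfac : ∀ x : X, π (T x) = S (π x))
    (hprox : ∀ x y : X, π x = π y → Proximal T x y) :
    (∀ d : ℕ, {p : X × X | π p.1 = π p.2} ⊆ AP T d) ∧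
    ((∀ x y : X, Proximal T x y) → ∀ d : ℕ, AP T d = Set.univ) := by
  have hsymm : ∀ c : X, π (T.symm c) = S.symm (π c) := by
    intro c
    have h1 := hfac (T.symm c)
    rw [Equiv.apply_symm_apply] at h1
    exact (S.symm_apply_eq.mpr h1).symm
  constructor
  · intro d pp hpp
    have h := proximal_mem_AP T hT hT' (fun a b => π a = π b)
      (isClosed_eq (hπc.comp continuous_fst) (hπc.comp continuous_snd))
      (fun a b hab => by show π (T a) = π (T b); rw [hfac, hfac, hab])
      (fun a b hab => by show π (T.symm a) = π (T.symm b); rw [hsymm, hsymm, hab])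
      (fun a b hab => hprox a b hab)
      pp.1 pp.2 hpp d
    simpa using h
  · intro hAll d
    apply Set.eq_univ_of_forall
    intro pp
    have h := proximal_mem_AP T hT hT' (fun _ _ => True)
      (by simpa using isClosed_univ)
      (fun _ _ _ => trivial) (fun _ _ _ => trivial)
      (fun a b _ => hAll a b)
      pp.1 pp.2 trivial d
    simpa using h
end

section
/- Let (X_i,T_i), i ∈ ℕ, be topological dynamical systems with diam(X_i) ≤ 1 and let π_i : (X_{i+1},T_{i+1}) → (X_i,T_i) be factor maps. Let X = {(x_i)_{i∈ℕ} ∈ ∏_i X_i : π_i(x_{i+1}) = x_i for all i} be the inverse limit, endowed with the metric ρ((x_i),(y_i)) = Σ_i 2^{-i} ρ_i(x_i,y_i) and the induced homeomorphism T((x_i)) = (T_i x_i). Fix d ∈ ℕ. If x = (x_i), y = (y_i) ∈ X are such that (x_i,y_i) ∈ AP^[d](X_i,T_i) for every i, then (x,y) ∈ AP^[d](X,T). -/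
/-- The regionally proximal relation of order `d` along arithmetic progressions, with
respect to an explicitly given distance function `ρ`. -/
def APdist {X : Type*} (ρ : X → X → ℝ) (T : Equiv.Perm X) (d : ℕ) (x y : X) : Prop :=
  ∀ δ : ℝ, 0 < δ → ∃ x' y' : X, ∃ n : ℤ,
    ρ x x' < δ ∧ ρ y y' < δ ∧
    ∀ i : ℕ, 1 ≤ i → i ≤ d →
      ρ ((T ^ ((i : ℤ) * n)) x') ((T ^ ((i : ℤ) * n)) y') < δ

/-- The inverse limit of the sequence of systems `(X i)` along the bonding maps `π i`. -/
def InvLimit {X : ℕ → Type*} (π : ∀ i, X (i + 1) → X i) : Type _ :=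
  {z : ∀ i, X i // ∀ i, π i (z (i + 1)) = z i}

/-- The induced homeomorphism on the inverse limit, `T (z_i)_i = (T_i z_i)_i`. -/
def limMap {X : ℕ → Type*} (T : ∀ i, Equiv.Perm (X i)) (π : ∀ i, X (i + 1) → X i)
    (hcomm : ∀ i x, π i (T (i + 1) x) = T i (π i x)) : Equiv.Perm (InvLimit π) where
  toFun z := ⟨fun i => T i (z.1 i), fun i => by rw [hcomm, z.2]⟩
  invFun z := ⟨fun i => (T i).symm (z.1 i), fun i => by
    have h := hcomm i ((T (i + 1)).symm (z.1 (i + 1)))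
    rw [Equiv.apply_symm_apply, z.2 i] at h
    show π i ((T (i + 1)).symm (z.1 (i + 1))) = (T i).symm (z.1 i)
    rw [h, Equiv.symm_apply_apply]⟩
  left_inv z := Subtype.ext (funext fun i => (T i).symm_apply_apply _)
  right_inv z := Subtype.ext (funext fun i => (T i).apply_symm_apply _)

/-- The metric `ρ((x_i), (y_i)) = ∑_i 2^{-i} ρ_i(x_i, y_i)` on the inverse limit. -/
noncomputable def limDist {X : ℕ → Type*} [∀ i, MetricSpace (X i)]
    (π : ∀ i, X (i + 1) → X i) (x y : InvLimit π) : ℝ :=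
  ∑' i : ℕ, (1 / 2 ^ i : ℝ) * dist (x.1 i) (y.1 i)

/-!
The weights `2⁻ⁱ` and `diam Xᵢ ≤ 1` make `ρ(z, z')` small as soon as finitely many coordinates
are close, and since the bonding maps are uniformly continuous the last of these coordinates
controls all earlier ones. A witness `(x', y', n)` for `(x_N, y_N) ∈ AP^[d](X_N, T_N)` at a small
enough scale therefore lifts, through the surjective bonding maps, to a witness for `(x, y)`,
because `T` commutes with the coordinate projections.
-/

theorem tsum_one_div_two_pow_mul_le {f : ℕ → ℝ} (hf₀ : ∀ i, 0 ≤ f i) (hf₁ : ∀ i, f i ≤ 1)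
    {N : ℕ} {ε : ℝ} (hε : 0 ≤ ε) (hfε : ∀ i < N, f i ≤ ε) :
    ∑' i, 1 / 2 ^ i * f i ≤ 2 * ε + 2 / 2 ^ N := by
  have hle : ∀ i, 1 / 2 ^ i * f i ≤ 1 / 2 ^ i := fun i =>
    mul_le_of_le_one_right (by positivity) (hf₁ i)
  have hs : Summable fun i => 1 / 2 ^ i * f i :=
    .of_nonneg_of_le (fun i => mul_nonneg (by positivity) (hf₀ i))
      (fun i => (hle i).trans_eq (one_div_pow 2 i).symm) summable_geometric_two
  rw [← hs.sum_add_tsum_nat_add N]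
  gcongr
  · calc ∑ i ∈ Finset.range N, 1 / 2 ^ i * f i
        ≤ ∑ i ∈ Finset.range N, (1 / 2) ^ i * ε := by
          gcongr with i hi
          · exact hf₀ i
          · rw [one_div_pow]
          · exact hfε i (Finset.mem_range.mp hi)
      _ = (∑ i ∈ Finset.range N, (1 / 2 : ℝ) ^ i) * ε := (Finset.sum_mul ..).symm
      _ ≤ 2 * ε := by gcongr; exact sum_geometric_two_le N
  · calc ∑' i, 1 / 2 ^ (i + N) * f (i + N)
        ≤ ∑' i, 2 / 2 ^ N / 2 / 2 ^ i :=
          ((summable_nat_add_iff N).mpr hs).tsum_le_tsum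
            (fun i => (hle _).trans_eq (by rw [pow_add]; field_simp))
            (summable_geometric_two' _)
      _ = 2 / 2 ^ N := tsum_geometric_two' _

namespace InvLimit

variable {X : ℕ → Type*} {π : ∀ i, X (i + 1) → X i}

theorem surjective_eval (hπs : ∀ i, Function.Surjective (π i)) (N : ℕ) :
    Function.Surjective (fun z : InvLimit π => z.1 N) := by
  intro w
  let down : ∀ i, i ≤ N → X i := fun _ h =>
    Nat.decreasingInduction (motive := fun m _ => X m) (fun k _ a => π k a) w h
  let up : ∀ i, N ≤ i → X i := fun _ h =>
    Nat.leRecOn (C := X) h (fun {k} a => (hπs k a).choose) w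
  refine ⟨⟨fun i => if h : i ≤ N then down i h else up i (le_of_not_ge h), fun i => ?_⟩, ?_⟩
  · beta_reduce
    rcases lt_trichotomy i N with hi | rfl | hi
    · rw [dif_pos (Nat.succ_le_of_lt hi), dif_pos hi.le]
      exact (Nat.decreasingInduction_succ_left _ _ hi hi.le).symm
    · rw [dif_neg (by omega), dif_pos le_rfl]
      simp only [up, down, Nat.leRecOn_succ', Nat.decreasingInduction_self]
      exact (hπs i w).choose_spec
    · rw [dif_neg (by omega), dif_neg (by omega)]
      simp only [up, Nat.leRecOn_succ (le_of_lt hi)]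
      exact (hπs i _).choose_spec
  · simp only [le_refl, dif_pos, down, Nat.decreasingInduction_self]

theorem limMap_zpow_apply (T : ∀ i, Equiv.Perm (X i))
    (hcomm : ∀ i x, π i (T (i + 1) x) = T i (π i x)) (m : ℤ) (z : InvLimit π) (i : ℕ) :
    ((limMap T π hcomm ^ m) z).1 i = (T i ^ m) (z.1 i) := by
  induction m using Int.induction_on generalizing z with
  | zero => rfl
  | succ k ih =>
    rw [zpow_add_one, zpow_add_one, Equiv.Perm.mul_apply, Equiv.Perm.mul_apply, ih]
    rfl
  | pred k ih =>
    rw [zpow_sub_one, zpow_sub_one, Equiv.Perm.mul_apply, Equiv.Perm.mul_apply, ih]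
    rfl

theorem exists_pos_forall_le_dist_lt [∀ i, MetricSpace (X i)]
    (hπ : ∀ i, UniformContinuous (π i)) (N : ℕ) {ε : ℝ} (hε : 0 < ε) :
    ∃ η > 0, ∀ z z' : InvLimit π, dist (z.1 N) (z'.1 N) < η →
      ∀ i ≤ N, dist (z.1 i) (z'.1 i) < ε := by
  induction N with
  | zero =>
    refine ⟨ε, hε, fun z z' hzz' i hi => ?_⟩
    rwa [Nat.le_zero.mp hi]
  | succ N ih =>
    obtain ⟨η₀, hη₀, hN⟩ := ih
    obtain ⟨η₁, hη₁, hπN⟩ := Metric.uniformContinuous_iff.mp (hπ N) η₀ hη₀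
    refine ⟨min η₁ ε, lt_min hη₁ hε, fun z z' hzz' i hi => ?_⟩
    rcases Nat.of_le_succ hi with hi | rfl
    · refine hN z z' ?_ i hi
      rw [← z.2 N, ← z'.2 N]
      exact hπN (hzz'.trans_le (min_le_left _ _))
    · exact hzz'.trans_le (min_le_right _ _)

theorem exists_forall_limDist_lt [∀ i, MetricSpace (X i)]
    (hdist : ∀ i (a b : X i), dist a b ≤ 1) (hπ : ∀ i, UniformContinuous (π i)) {δ : ℝ} (hδ : 0 < δ) :
    ∃ N, ∃ η > 0, ∀ z z' : InvLimit π, dist (z.1 N) (z'.1 N) < η → limDist π z z' < δ := by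
  obtain ⟨N, hN⟩ : ∃ N : ℕ, (1 / 2 : ℝ) ^ N < δ / 4 :=
    exists_pow_lt_of_lt_one (by positivity) (by norm_num)
  obtain ⟨η, hη, hcoord⟩ := exists_pos_forall_le_dist_lt hπ N (ε := δ / 8) (by positivity)
  refine ⟨N, η, hη, fun z z' hzz' => ?_⟩
  have htail : (2 : ℝ) / 2 ^ N = 2 * (1 / 2) ^ N := by rw [one_div_pow]; ring
  calc limDist π z z' ≤ 2 * (δ / 8) + 2 / 2 ^ N :=
        tsum_one_div_two_pow_mul_le (fun _ => dist_nonneg) (fun i => hdist i _ _)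
          (by positivity) (fun i hi => (hcoord z z' hzz' i hi.le).le)
    _ < δ := by linarith

end InvLimit

theorem ap_of_invLimit_general {X : ℕ → Type*} [∀ i, MetricSpace (X i)] [∀ i, CompactSpace (X i)]
    (hdiam : ∀ i, Metric.diam (Set.univ : Set (X i)) ≤ 1)
    (T : ∀ i, Equiv.Perm (X i))
    (π : ∀ i, X (i + 1) → X i)
    (hπc : ∀ i, Continuous (π i)) (hπs : ∀ i, Function.Surjective (π i))
    (hcomm : ∀ i x, π i (T (i + 1) x) = T i (π i x))
    (d : ℕ) (x y : InvLimit π)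
    (h : ∀ i, APdist dist (T i) d (x.1 i) (y.1 i)) :
    APdist (limDist π) (limMap T π hcomm) d x y := by
  intro δ hδ
  have hdist : ∀ i (a b : X i), dist a b ≤ 1 := fun i a b =>
    (Metric.dist_le_diam_of_mem Metric.isBounded_of_compactSpace (Set.mem_univ a)
      (Set.mem_univ b)).trans (hdiam i)
  obtain ⟨N, η, hη, hclose⟩ := InvLimit.exists_forall_limDist_lt hdist
    (fun i => CompactSpace.uniformContinuous_of_continuous (hπc i)) hδ
  obtain ⟨x', y', n, hx, hy, hxy⟩ := h N η hη
  obtain ⟨zx, rfl⟩ := InvLimit.surjective_eval hπs N x'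
  obtain ⟨zy, rfl⟩ := InvLimit.surjective_eval hπs N y'
  refine ⟨zx, zy, n, hclose _ _ hx, hclose _ _ hy, fun j hj₁ hj₂ => hclose _ _ ?_⟩
  rw [InvLimit.limMap_zpow_apply, InvLimit.limMap_zpow_apply]
  exact hxy j hj₁ hj₂

/-- Let `(X_i, T_i)` be t.d.s. with `diam X_i ≤ 1` and `π_i` factor maps,
let `(X, T)` be the inverse limit with the metric `ρ = ∑ 2^{-i} ρ_i`.  If
`(x_i, y_i) ∈ AP^[d](X_i, T_i)` for every `i`, then `(x, y) ∈ AP^[d](X, T)`. -/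
theorem ap_of_invLimit {X : ℕ → Type*} [∀ i, MetricSpace (X i)] [∀ i, CompactSpace (X i)]
    (hdiam : ∀ i, Metric.diam (Set.univ : Set (X i)) ≤ 1)
    (T : ∀ i, Equiv.Perm (X i))
    (hTc : ∀ i, Continuous (T i)) (hTc' : ∀ i, Continuous (T i).symm)
    (π : ∀ i, X (i + 1) → X i)
    (hπc : ∀ i, Continuous (π i)) (hπs : ∀ i, Function.Surjective (π i))
    (hcomm : ∀ i x, π i (T (i + 1) x) = T i (π i x))
    (d : ℕ) (x y : InvLimit π)
    (h : ∀ i, APdist dist (T i) d (x.1 i) (y.1 i)) :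
    APdist (limDist π) (limMap T π hcomm) d x y :=
  ap_of_invLimit_general hdiam T π hπc hπs hcomm d x y h
end

section
/- Let (X,T) be a topological dynamical system, let U₀,U₁ ⊆ X and d ∈ ℕ. Enumerate {0,1}^d = {t^{(1)},…,t^{(2^d)}}, set m = d·2^d, and let (i₁,…,i_m) ∈ {0,1}^m be the concatenation of the tuples t^{(1)},t^{(2)},…,t^{(2^d)}. If n > 0 is such that T^{-n}U_{i₁} ∩ T^{-2n}U_{i₂} ∩ … ∩ T^{-mn}U_{i_m} ≠ ∅, then for every (t₁,…,t_d) ∈ {0,1}^d one has T^{-n}U_{t₁} ∩ T^{-2n}U_{t₂} ∩ … ∩ T^{-dn}U_{t_d} ≠ ∅. -/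
/-! Position `k·d + r + 1` of the concatenated word carries the `r`-th letter of the `k`-th
block, so a point `x` of the long intersection, pushed forward by `T^{k d n}` for the block
`k` enumerating `t`, lies in the short intersection for `t`. -/

theorem Equiv.Perm.iInter_preimage_pow_nonempty_of_add {α ι : Type*} (T : Equiv.Perm α)
    (f : ι → ℕ) (a : ℕ) (S : ι → Set α)
    (h : (⋂ i, ⇑(T ^ (f i + a)) ⁻¹' S i).Nonempty) :
    (⋂ i, ⇑(T ^ f i) ⁻¹' S i).Nonempty := by
  obtain ⟨x, hx⟩ := h
  refine ⟨(T ^ a) x, Set.mem_iInter.2 fun i => ?_⟩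
  simpa [pow_add] using Set.mem_iInter.1 hx i

theorem concatenated_ap_intersection_general {X : Type*}
    (T : Equiv.Perm X)
    (U₀ U₁ : Set X) (d : ℕ) (e : Fin (2 ^ d) ≃ (Fin d → Bool))
    (n : ℕ)
    (h : (⋂ k : Fin (2 ^ d), ⋂ r : Fin d,
      ⇑(T ^ ((((k : ℕ) * d + (r : ℕ) + 1) * n))) ⁻¹'
        (if e k r then U₁ else U₀)).Nonempty) :
    ∀ t : Fin d → Bool,
      (⋂ r : Fin d,
        ⇑(T ^ (((r : ℕ) + 1) * n)) ⁻¹' (if t r then U₁ else U₀)).Nonempty := by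
  intro t
  have block : (⋂ r : Fin d, ⇑(T ^ (((r : ℕ) + 1) * n + (e.symm t : ℕ) * d * n)) ⁻¹'
      (if e (e.symm t) r then U₁ else U₀)).Nonempty := by
    refine h.mono ((Set.iInter_subset _ (e.symm t)).trans_eq ?_)
    congr! 5 with r
    ring
  rw [e.apply_symm_apply] at block
  exact T.iInter_preimage_pow_nonempty_of_add _ _ _ block

/-- Let `(X, T)` be a t.d.s., `U₀, U₁ ⊆ X`, `d ∈ ℕ`, and enumerate
`{0,1}^d` by a bijection `e : Fin (2^d) ≃ (Fin d → Bool)`.  Let `(i_1, …, i_m)`,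
`m = d · 2^d`, be the concatenation of the tuples `e 0, e 1, …`; that is, the entry at
(1-based) position `k·d + r + 1` (`k < 2^d`, `r < d`) is `e k r`.  If `n > 0` satisfies
`T^{-n} U_{i_1} ∩ T^{-2n} U_{i_2} ∩ … ∩ T^{-mn} U_{i_m} ≠ ∅`, then for every
`(t_1, …, t_d) ∈ {0,1}^d` one has `T^{-n} U_{t_1} ∩ … ∩ T^{-dn} U_{t_d} ≠ ∅`. -/
theorem concatenated_ap_intersection {X : Type*} [MetricSpace X] [CompactSpace X]
    (T : Equiv.Perm X) (hT : Continuous T) (hT' : Continuous T.symm)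
    (U₀ U₁ : Set X) (d : ℕ) (e : Fin (2 ^ d) ≃ (Fin d → Bool))
    (n : ℕ) (hn : 0 < n)
    (h : (⋂ k : Fin (2 ^ d), ⋂ r : Fin d,
      ⇑(T ^ ((((k : ℕ) * d + (r : ℕ) + 1) * n))) ⁻¹'
        (if e k r then U₁ else U₀)).Nonempty) :
    ∀ t : Fin d → Bool,
      (⋂ r : Fin d,
        ⇑(T ^ (((r : ℕ) + 1) * n)) ⁻¹' (if t r then U₁ else U₀)).Nonempty :=
  concatenated_ap_intersection_general T U₀ U₁ d e n h
end

section
/- Let π₁ : (X,T) → (Y,T) and π₂ : (Y,T) → (Z,T) be open factor maps between minimal topological dynamical systems, and suppose each of π₁ and π₂ has a relatively invariant measure with a section of full support. Then the composition π₂ ∘ π₁ : (X,T) → (Z,T) has a relatively invariant measure with a section of full support; explicitly, if λ¹ : Y → M(X) and λ² : Z → M(Y) are full-support sections, then η : Z → M(X) defined by η_z(f) = ∫_Y (∫_X f dλ¹_y) dλ²_z(y) for f ∈ C(X) is a full-support section for π₂ ∘ π₁. -/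
open MeasureTheory Filter
open scoped ENNReal NNReal BoundedContinuousFunction

/-! The mixture `η_z = ∫ λ¹_y dλ²_z(y)` inherits each defining property from `λ¹` and `λ²`.
Equivariance is a change of variables. Since `λ²_z`-almost every `y` lies over `z` and `λ¹_y`
lives on the fibre over `y`, `η_z` lives on the fibre over `z`. If an open `U` contains a point
`x` over `z`, then `{y | λ¹_y(U) > 0}` is open (by the portmanteau theorem `y ↦ λ¹_y(U)` is lower
semicontinuous) and contains `π₁ x`, so it has positive `λ²_z`-measure and `η_z(U) > 0`.
Continuity holds because `y ↦ ∫ f dλ¹_y` is bounded continuous for bounded continuous `f`. -/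

/-- A system is minimal if every (full) orbit is dense. -/
def IsMinimal {X : Type*} [TopologicalSpace X] (T : Equiv.Perm X) : Prop :=
  ∀ x : X, Dense (Set.range fun n : ℤ => (T ^ n) x)

/-- `lam` is a full-support section for the factor map `π : (X,T) → (Y,S)`:
it is continuous, satisfies `T_* lam_y = lam_{S y}`, and `supp lam_y = π⁻¹(y)` for all `y`
(encoded by: `lam_y (π⁻¹ {y}) = 1` and every point of the fiber has all of its open
neighborhoods of positive `lam_y`-measure). -/
def IsFullSupportSection {X Y : Type*}
    [TopologicalSpace X] [MeasurableSpace X] [OpensMeasurableSpace X] [TopologicalSpace Y]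
    (T : Equiv.Perm X) (S : Equiv.Perm Y) (π : X → Y)
    (lam : Y → ProbabilityMeasure X) : Prop :=
  Continuous lam ∧
  (∀ y : Y, (lam y : Measure X).map T = (lam (S y) : Measure X)) ∧
  (∀ y : Y, (lam y : Measure X) (π ⁻¹' {y}) = 1) ∧
  (∀ y : Y, ∀ x : X, π x = y → ∀ U : Set X, IsOpen U → x ∈ U →
    0 < (lam y : Measure X) U)

namespace MeasureTheory.Measure

variable {X Y : Type*} [MeasurableSpace X] [MeasurableSpace Y]

lemma map_bind_of_map_eq {T : X → X} {S : Y → Y} (hT : Measurable T) (hS : Measurable S)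
    {lam : Y → Measure X} (hlam : Measurable lam) (h : ∀ y, (lam y).map T = lam (S y))
    (μ : Measure Y) : (μ.bind lam).map T = (μ.map S).bind lam := by
  ext s hs
  have hlam_s : Measurable fun y => lam y s := (measurable_coe hs).comp hlam
  rw [map_apply hT hs, bind_apply (hT hs) hlam.aemeasurable, bind_apply hs hlam.aemeasurable,
    lintegral_map hlam_s hS]
  simp_rw [← h, map_apply hT hs]

lemma bind_apply_eq_one {μ : Measure Y} [IsProbabilityMeasure μ] {lam : Y → Measure X}
    (hlam : AEMeasurable lam μ) {s : Set X} (hs : MeasurableSet s)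
    (h : ∀ᵐ y ∂μ, lam y s = 1) : μ.bind lam s = 1 := by
  rw [bind_apply hs hlam, lintegral_congr_ae h, lintegral_one, measure_univ]

lemma bind_apply_pos {μ : Measure Y} {lam : Y → Measure X} (hlam : Measurable lam)
    {s : Set X} (hs : MeasurableSet s) (h : 0 < μ {y | 0 < lam y s}) : 0 < μ.bind lam s := by
  have hlam_s : Measurable fun y => lam y s := (measurable_coe hs).comp hlam
  rw [bind_apply hs hlam.aemeasurable, lintegral_pos_iff_support hlam_s]
  exact h.trans_le (measure_mono fun y hy => (show 0 < lam y s from hy).ne')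

end MeasureTheory.Measure

section ContinuousFamily

variable {X Y : Type*} [TopologicalSpace X] [HasOuterApproxClosed X] [MeasurableSpace X]
  [BorelSpace X] [TopologicalSpace Y] {lam : Y → ProbabilityMeasure X}

lemma Continuous.lowerSemicontinuous_measure_apply (hc : Continuous lam) {G : Set X}
    (hG : IsOpen G) : LowerSemicontinuous fun y => (lam y : Measure X) G := fun y _ hy =>
  eventually_lt_of_lt_liminf
    (hy.trans_le (ProbabilityMeasure.le_liminf_measure_open_of_tendsto (hc.tendsto y) hG))

lemma Continuous.measurable_toMeasure [MeasurableSpace Y] [OpensMeasurableSpace Y]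
    (hc : Continuous lam) : Measurable fun y => (lam y : Measure X) := by
  refine Measure.measurable_of_measurable_coe _ fun s hs => ?_
  induction s, hs using MeasurableSet.induction_on_open with
  | isOpen U hU => exact (hc.lowerSemicontinuous_measure_apply hU).measurable
  | compl t ht iht =>
    simp_rw [measure_compl ht (measure_ne_top _ _), measure_univ]
    exact measurable_const.sub iht
  | iUnion f hd hm ih =>
    simp_rw [measure_iUnion hd hm]
    exact Measurable.tsum ih

end ContinuousFamily

namespace MeasureTheory.ProbabilityMeasure

variable {X Y : Type*} [MeasurableSpace X] [MeasurableSpace Y]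

/-- `μ.bind lam hlam` is the mixture `∫ lam y dμ(y)`. -/
noncomputable def bind (μ : ProbabilityMeasure Y) (lam : Y → ProbabilityMeasure X)
    (hlam : Measurable fun y => (lam y : Measure X)) : ProbabilityMeasure X :=
  ⟨(μ : Measure Y).bind fun y => lam y,
    isProbabilityMeasure_bind hlam.aemeasurable (.of_forall fun _ => inferInstance)⟩

@[simp]
lemma toMeasure_bind (μ : ProbabilityMeasure Y) (lam : Y → ProbabilityMeasure X)
    (hlam : Measurable fun y => (lam y : Measure X)) :
    (μ.bind lam hlam : Measure X) = (μ : Measure Y).bind fun y => lam y :=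
  rfl

lemma testAgainstNN_le_nndist_zero [TopologicalSpace X] (μ : ProbabilityMeasure X)
    (f : X →ᵇ ℝ≥0) :
    μ.toFiniteMeasure.testAgainstNN f ≤ nndist f 0 :=
  calc μ.toFiniteMeasure.testAgainstNN f
      ≤ μ.toFiniteMeasure.testAgainstNN (.const X (nndist f 0)) :=
        FiniteMeasure.testAgainstNN_mono _ (BoundedContinuousFunction.NNReal.upper_bound f)
    _ = nndist f 0 := by simp [FiniteMeasure.testAgainstNN_const]

noncomputable def testAgainstNNFamily [TopologicalSpace X] [OpensMeasurableSpace X]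
    [TopologicalSpace Y] {lam : Y → ProbabilityMeasure X} (hc : Continuous lam)
    (f : X →ᵇ ℝ≥0) : Y →ᵇ ℝ≥0 :=
  .mkOfBound ⟨fun y => (lam y).toFiniteMeasure.testAgainstNN f,
    (continuous_testAgainstNN_eval f).comp hc⟩ (nndist f 0) fun a b => by
      simpa [NNReal.dist_eq] using abs_sub_le_of_le_of_le (NNReal.coe_nonneg _)
        (NNReal.coe_le_coe.2 ((lam a).testAgainstNN_le_nndist_zero f)) (NNReal.coe_nonneg _)
        (NNReal.coe_le_coe.2 ((lam b).testAgainstNN_le_nndist_zero f))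

variable [TopologicalSpace X] [HasOuterApproxClosed X] [BorelSpace X]
  [TopologicalSpace Y] [OpensMeasurableSpace Y]

lemma lintegral_toMeasure_bind {lam : Y → ProbabilityMeasure X} (hc : Continuous lam)
    (μ : ProbabilityMeasure Y) (f : X →ᵇ ℝ≥0) :
    ∫⁻ x, f x ∂(μ.bind lam hc.measurable_toMeasure : Measure X) =
      ∫⁻ y, testAgainstNNFamily hc f y ∂(μ : Measure Y) := by
  rw [toMeasure_bind, Measure.lintegral_bind hc.measurable_toMeasure.aemeasurable
    f.measurable_coe_ennreal_comp.aemeasurable]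
  exact lintegral_congr fun y =>
    (FiniteMeasure.testAgainstNN_coe_eq (μ := (lam y).toFiniteMeasure)).symm

lemma continuous_bind {lam : Y → ProbabilityMeasure X} (hc : Continuous lam) :
    Continuous fun μ : ProbabilityMeasure Y => μ.bind lam hc.measurable_toMeasure := by
  refine continuous_iff_continuousAt.2 fun μ => ?_
  refine tendsto_iff_forall_lintegral_tendsto.2 fun f => ?_
  simp only [lintegral_toMeasure_bind hc]
  exact tendsto_iff_forall_lintegral_tendsto.1 tendsto_id _

end MeasureTheory.ProbabilityMeasure

open ProbabilityMeasure in
theorem IsFullSupportSection.comp {X Y Z : Type*}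
    [TopologicalSpace X] [HasOuterApproxClosed X] [MeasurableSpace X] [BorelSpace X]
    [TopologicalSpace Y] [MeasurableSpace Y] [OpensMeasurableSpace Y]
    [TopologicalSpace Z] [T1Space Z]
    {TX : Equiv.Perm X} {TY : Equiv.Perm Y} {TZ : Equiv.Perm Z} {π₁ : X → Y} {π₂ : Y → Z}
    {lam₁ : Y → ProbabilityMeasure X} {lam₂ : Z → ProbabilityMeasure Y}
    (hTX : Measurable TX) (hTY : Measurable TY) (hπ₁ : Continuous π₁) (hπ₂ : Continuous π₂)
    (h₁ : IsFullSupportSection TX TY π₁ lam₁) (h₂ : IsFullSupportSection TY TZ π₂ lam₂) :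
    IsFullSupportSection TX TZ (π₂ ∘ π₁)
      fun z => (lam₂ z).bind lam₁ h₁.1.measurable_toMeasure := by
  obtain ⟨hc₁, hmap₁, hfib₁, hsupp₁⟩ := h₁
  obtain ⟨hc₂, hmap₂, hfib₂, hsupp₂⟩ := h₂
  have hm₁ := hc₁.measurable_toMeasure
  refine ⟨(continuous_bind hc₁).comp hc₂, fun z => ?_, fun z => ?_, ?_⟩
  · rw [toMeasure_bind, toMeasure_bind, Measure.map_bind_of_map_eq hTX hTY hm₁ hmap₁, hmap₂]
  · refine Measure.bind_apply_eq_one hm₁.aemeasurable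
      ((isClosed_singleton.preimage (hπ₂.comp hπ₁)).measurableSet) ?_
    have hae : ∀ᵐ y ∂(lam₂ z : Measure Y), y ∈ π₂ ⁻¹' {z} :=
      (ae_iff_measure_eq (isClosed_singleton.preimage hπ₂).measurableSet.nullMeasurableSet).2
        ((hfib₂ z).trans measure_univ.symm)
    filter_upwards [hae] with y (hy : π₂ y = z)
    refine le_antisymm prob_le_one ((hfib₁ y).symm.trans_le (measure_mono ?_))
    exact fun x (hx : π₁ x = y) => show π₂ (π₁ x) = z by rw [hx, hy]
  · rintro z x rfl U hU hxU
    have hpos : IsOpen {y | 0 < (lam₁ y : Measure X) U} :=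
      isOpen_iff_mem_nhds.2 fun y hy => hc₁.lowerSemicontinuous_measure_apply hU y 0 hy
    exact Measure.bind_apply_pos hm₁ hU.measurableSet
      (hsupp₂ _ (π₁ x) rfl _ hpos (hsupp₁ _ x rfl U hU hxU))

theorem comp_full_support_section_general {X Y Z : Type*}
    [MetricSpace X] [MeasurableSpace X] [BorelSpace X]
    [MetricSpace Y] [MeasurableSpace Y] [BorelSpace Y]
    [MetricSpace Z]
    (TX : Equiv.Perm X) (hTX : Continuous TX)
    (TY : Equiv.Perm Y) (hTY : Continuous TY)
    (TZ : Equiv.Perm Z)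
    (π₁ : X → Y) (hπ₁c : Continuous π₁)
    (π₂ : Y → Z) (hπ₂c : Continuous π₂)
    (lam₁ : Y → ProbabilityMeasure X) (hlam₁ : IsFullSupportSection TX TY π₁ lam₁)
    (lam₂ : Z → ProbabilityMeasure Y) (hlam₂ : IsFullSupportSection TY TZ π₂ lam₂) :
    ∃ η : Z → ProbabilityMeasure X,
      (∀ z : Z, (η z : Measure X) = (lam₂ z : Measure Y).bind fun y => (lam₁ y : Measure X)) ∧
      IsFullSupportSection TX TZ (π₂ ∘ π₁) η :=
  ⟨_, fun _ => rfl, hlam₁.comp hTX.measurable hTY.measurable hπ₁c hπ₂c hlam₂⟩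

/-- Let `π₁ : (X,T_X) → (Y,T_Y)` and `π₂ : (Y,T_Y) → (Z,T_Z)` be open
factor maps between minimal t.d.s., each admitting a RIM with a full-support section.
Then so does `π₂ ∘ π₁`; explicitly the section `η_z = ∫_Y λ¹_y dλ²_z(y)`
(i.e. `η z = (λ² z).bind λ¹`) is a full-support section for `π₂ ∘ π₁`. -/
theorem comp_full_support_section {X Y Z : Type*}
    [MetricSpace X] [CompactSpace X] [MeasurableSpace X] [BorelSpace X]
    [MetricSpace Y] [CompactSpace Y] [MeasurableSpace Y] [BorelSpace Y]
    [MetricSpace Z] [CompactSpace Z] [MeasurableSpace Z] [BorelSpace Z]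
    (TX : Equiv.Perm X) (hTX : Continuous TX) (hTX' : Continuous TX.symm)
    (TY : Equiv.Perm Y) (hTY : Continuous TY) (hTY' : Continuous TY.symm)
    (TZ : Equiv.Perm Z) (hTZ : Continuous TZ) (hTZ' : Continuous TZ.symm)
    (hminX : IsMinimal TX) (hminY : IsMinimal TY) (hminZ : IsMinimal TZ)
    (π₁ : X → Y) (hπ₁c : Continuous π₁) (hπ₁s : Function.Surjective π₁)
    (hπ₁o : IsOpenMap π₁) (hfac₁ : ∀ x : X, π₁ (TX x) = TY (π₁ x))
    (π₂ : Y → Z) (hπ₂c : Continuous π₂) (hπ₂s : Function.Surjective π₂)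
    (hπ₂o : IsOpenMap π₂) (hfac₂ : ∀ y : Y, π₂ (TY y) = TZ (π₂ y))
    (lam₁ : Y → ProbabilityMeasure X) (hlam₁ : IsFullSupportSection TX TY π₁ lam₁)
    (lam₂ : Z → ProbabilityMeasure Y) (hlam₂ : IsFullSupportSection TY TZ π₂ lam₂) :
    ∃ η : Z → ProbabilityMeasure X,
      (∀ z : Z, (η z : Measure X) = (lam₂ z : Measure Y).bind fun y => (lam₁ y : Measure X)) ∧
      IsFullSupportSection TX TZ (π₂ ∘ π₁) η :=
  comp_full_support_section_general TX hTX TY hTY TZ π₁ hπ₁c π₂ hπ₂c lam₁ hlam₁ lam₂ hlam₂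
end

section
/- Let 𝕋 = ℝ/ℤ. Let α, β ∈ 𝕋 be such that the rotation R_{α,β}(x,y) = (x+α, y+β) of 𝕋² is minimal. Let u : 𝕋 → 𝕋 be a continuous map such that u(x) = β + g(x+α) − g(x) for all x, where g : 𝕋 → 𝕋 is Borel measurable. Define T : 𝕋² → 𝕋² by T(x,y) = (x+α, y+u(x)). Then: (i) the Haar probability measure m on 𝕋² is T-invariant; (ii) (𝕋², m, T) is measurably isomorphic to (𝕋², m, R_{α,β}) via the measure-preserving bijection φ(x,y) = (x, y − g(x)), which satisfies φ ∘ T = R_{α,β} ∘ φ; (iii) (𝕋²,T) is uniquely ergodic, with m its unique invariant Borel probability measure; (iv) (𝕋²,T) is minimal. -/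
open MeasureTheory

notation "𝕋" => AddCircle (1 : ℝ)

instance : Fact ((0 : ℝ) < 1) := ⟨one_pos⟩

/-- The skew product `T(x, y) = (x + α, y + u x)` on `𝕋²`, as a self-homeomorphism. -/
noncomputable def skew (α : 𝕋) (u : 𝕋 → 𝕋) : Equiv.Perm (𝕋 × 𝕋) where
  toFun p := (p.1 + α, p.2 + u p.1)
  invFun p := (p.1 - α, p.2 - u (p.1 - α))
  left_inv p := by simp
  right_inv p := by simp

/-- The rotation `R_{α,β}(x, y) = (x + α, y + β)` on `𝕋²`. -/
noncomputable def rot (α β : 𝕋) : Equiv.Perm (𝕋 × 𝕋) where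
  toFun p := (p.1 + α, p.2 + β)
  invFun p := (p.1 - α, p.2 - β)
  left_inv p := by simp
  right_inv p := by simp

/-! ### Auxiliary material -/

open ENNReal NNReal BoundedContinuousFunction

instance : IsProbabilityMeasure (volume : Measure 𝕋) :=
  ⟨by rw [AddCircle.measure_univ]; simp⟩

instance : IsProbabilityMeasure (volume : Measure (𝕋 × 𝕋)) := by
  rw [Measure.volume_eq_prod]; infer_instance

instance : Measure.IsAddHaarMeasure (volume : Measure (𝕋 × 𝕋)) := by
  rw [Measure.volume_eq_prod]; infer_instance

/-- Fiberwise translations preserve the Haar measure of `𝕋²`. -/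
lemma aux_mp (a : 𝕋) (v : 𝕋 → 𝕋) (hv : Measurable v) :
    MeasurePreserving (fun p : 𝕋 × 𝕋 => (p.1 + a, p.2 + v p.1)) volume volume := by
  rw [Measure.volume_eq_prod]
  exact (measurePreserving_add_right volume a).skew_product
    (g := fun x y => y + v x) (measurable_snd.add (hv.comp measurable_fst))
    (Filter.Eventually.of_forall fun x => (measurePreserving_add_right volume (v x)).map_eq)

lemma aux_mp_sub (v : 𝕋 → 𝕋) (hv : Measurable v) :
    MeasurePreserving (fun p : 𝕋 × 𝕋 => (p.1, p.2 - v p.1)) volume volume := by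
  have := aux_mp 0 (fun x => -v x) hv.neg
  simpa [sub_eq_add_neg] using this

lemma aux_mp_add (v : 𝕋 → 𝕋) (hv : Measurable v) :
    MeasurePreserving (fun p : 𝕋 × 𝕋 => (p.1, p.2 + v p.1)) volume volume := by
  have := aux_mp 0 v hv
  simpa using this

lemma perm_zpow_succ {X : Type*} (e : Equiv.Perm X) (n : ℤ) (x : X) :
    (e ^ (n + 1)) x = (e ^ n) (e x) := by
  rw [zpow_add_one]; rfl

lemma perm_zpow_pred {X : Type*} (e : Equiv.Perm X) (n : ℤ) (x : X) :
    (e ^ (n - 1)) x = (e ^ n) (e⁻¹ x) := by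
  rw [zpow_sub_one]; rfl

lemma perm_zpow_measurable {X : Type*} [MeasurableSpace X] (e : Equiv.Perm X)
    (h : Measurable e) (h' : Measurable ⇑e⁻¹) (n : ℤ) : Measurable ⇑(e ^ n) := by
  induction n using Int.induction_on with
  | zero => simpa using measurable_id
  | succ k ih =>
      have he : ⇑(e ^ ((k : ℤ) + 1)) = ⇑(e ^ (k : ℤ)) ∘ ⇑e := funext fun x => perm_zpow_succ ..
      rw [he]; exact ih.comp h
  | pred k ih =>
      have he : ⇑(e ^ (-(k : ℤ) - 1)) = ⇑(e ^ (-(k : ℤ))) ∘ ⇑e⁻¹ := funext fun x => perm_zpow_pred ..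
      rw [he]; exact ih.comp h'

lemma perm_zpow_continuous {X : Type*} [TopologicalSpace X] (e : Equiv.Perm X)
    (h : Continuous e) (h' : Continuous ⇑e⁻¹) (n : ℤ) : Continuous ⇑(e ^ n) := by
  induction n using Int.induction_on with
  | zero => simpa using continuous_id
  | succ k ih =>
      have he : ⇑(e ^ ((k : ℤ) + 1)) = ⇑(e ^ (k : ℤ)) ∘ ⇑e := funext fun x => perm_zpow_succ ..
      rw [he]; exact ih.comp h
  | pred k ih =>
      have he : ⇑(e ^ (-(k : ℤ) - 1)) = ⇑(e ^ (-(k : ℤ))) ∘ ⇑e⁻¹ := funext fun x => perm_zpow_pred ..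
      rw [he]; exact ih.comp h'

lemma perm_zpow_map_eq {X : Type*} [MeasurableSpace X] (e : Equiv.Perm X)
    (h : Measurable e) (h' : Measurable ⇑e⁻¹) (μ : Measure X)
    (hμ : μ.map ⇑e = μ) (n : ℤ) : μ.map ⇑(e ^ n) = μ := by
  have hinv : μ.map ⇑e⁻¹ = μ := by
    conv_lhs => rw [← hμ]
    rw [Measure.map_map h' h]
    have he : ⇑e⁻¹ ∘ ⇑e = id := funext fun x => e.symm_apply_apply x
    rw [he, Measure.map_id]
  induction n using Int.induction_on with
  | zero => simp [Measure.map_id]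
  | succ k ih =>
      have he : ⇑(e ^ ((k : ℤ) + 1)) = ⇑(e ^ (k : ℤ)) ∘ ⇑e := funext fun x => perm_zpow_succ ..
      rw [he, ← Measure.map_map (perm_zpow_measurable e h h' _) h, hμ, ih]
  | pred k ih =>
      have he : ⇑(e ^ (-(k : ℤ) - 1)) = ⇑(e ^ (-(k : ℤ))) ∘ ⇑e⁻¹ := funext fun x => perm_zpow_pred ..
      rw [he, ← Measure.map_map (perm_zpow_measurable e h h' _) h', hinv, ih]

/-- A probability measure on `𝕋²` invariant under a dense set of translations is
the Haar measure. -/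
lemma dense_translate_eq_volume (D : Set (𝕋 × 𝕋)) (hD : Dense D)
    (ν : Measure (𝕋 × 𝕋)) [IsProbabilityMeasure ν]
    (hν : ∀ d ∈ D, ν.map (· + d) = ν) : ν = volume := by
  have step2 : ∀ (f : (𝕋 × 𝕋) →ᵇ ℝ) (d : 𝕋 × 𝕋), ∫ x, f (x + d) ∂ν = ∫ x, f x ∂ν := by
    intro f d
    have hFc : Continuous fun c : 𝕋 × 𝕋 => ∫ x, f (x + c) ∂ν := by
      apply continuous_of_dominated (bound := fun _ => ‖f‖)
      · intro c
        exact (f.continuous.comp (continuous_id.add continuous_const)).aestronglyMeasurable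
      · intro c
        exact Filter.Eventually.of_forall fun x => f.norm_coe_le_norm (x + c)
      · exact integrable_const _
      · exact Filter.Eventually.of_forall fun x =>
          f.continuous.comp (continuous_const.add continuous_id)
    have heq : Set.EqOn (fun c : 𝕋 × 𝕋 => ∫ x, f (x + c) ∂ν) (fun _ => ∫ x, f x ∂ν) D := by
      intro c hc
      have h1 : ∫ x, f x ∂(ν.map (· + c)) = ∫ x, f (x + c) ∂ν :=
        integral_map (measurable_add_const c).aemeasurable f.continuous.aestronglyMeasurable
      show ∫ x, f (x + c) ∂ν = ∫ x, f x ∂ν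
      rw [← h1, hν c hc]
    have := Continuous.ext_on hD hFc continuous_const heq
    exact congrFun this d
  have step3 : ∀ d : 𝕋 × 𝕋, ν.map (· + d) = ν := by
    intro d
    have : IsProbabilityMeasure (ν.map (· + d)) :=
      Measure.isProbabilityMeasure_map (measurable_add_const d).aemeasurable
    apply ext_of_forall_lintegral_eq_of_IsFiniteMeasure
    intro f
    rw [lintegral_map f.measurable_coe_ennreal_comp (measurable_add_const d)]
    set G : C(𝕋 × 𝕋, 𝕋 × 𝕋) := ⟨fun x => x + d, continuous_id.add continuous_const⟩ with hG
    have hfd : (fun x : 𝕋 × 𝕋 => (f (x + d) : ℝ≥0∞)) = fun x => ((f.compContinuous G) x : ℝ≥0∞) :=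
      rfl
    have h1 : ∫⁻ x, (f (x + d) : ℝ≥0∞) ∂ν ≠ ∞ := by
      rw [hfd]; exact (lintegral_lt_top_of_nnreal ν _).ne
    have h2 : ∫⁻ x, (f x : ℝ≥0∞) ∂ν ≠ ∞ := (lintegral_lt_top_of_nnreal ν f).ne
    rw [← ENNReal.toReal_eq_toReal_iff' h1 h2, hfd,
      toReal_lintegral_coe_eq_integral (f.compContinuous G) ν,
      toReal_lintegral_coe_eq_integral f ν]
    set f₀ : (𝕋 × 𝕋) →ᵇ ℝ := BoundedContinuousFunction.comp _ isometry_subtype_coe.lipschitz f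
      with hf₀
    have e : ∀ x, ((f.compContinuous G) x : ℝ) = f₀ (x + d) := fun x => rfl
    simp only [e]
    exact step2 f₀ d
  have : ν.IsAddLeftInvariant := by
    constructor
    intro d
    have h : (fun x : 𝕋 × 𝕋 => d + x) = (fun x => x + d) := funext fun x => add_comm d x
    rw [h, step3 d]
  have h := Measure.isAddInvariant_eq_smul_of_compactSpace ν volume
  have h2 : (ν Set.univ) = ((Measure.addHaarScalarFactor ν (volume : Measure (𝕋 × 𝕋)) : ℝ≥0) :
      ℝ≥0∞) * (volume : Measure (𝕋 × 𝕋)) Set.univ := by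
    conv_lhs => rw [h]
    exact Measure.coe_nnreal_smul_apply _ _ _
  simp [measure_univ] at h2
  rw [h, ← h2]; simp

lemma rot_zpow (α β : 𝕋) (n : ℤ) (q : 𝕋 × 𝕋) :
    ((rot α β ^ n) q) = (q.1 + n • α, q.2 + n • β) := by
  induction n using Int.induction_on generalizing q with
  | zero => simp
  | succ k ih =>
      rw [perm_zpow_succ]
      have h : rot α β q = (q.1 + α, q.2 + β) := rfl
      rw [h, ih ((q.1 + α, q.2 + β))]
      refine Prod.ext ?_ ?_ <;> simp [add_zsmul] <;> abel
  | pred k ih =>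
      rw [perm_zpow_pred]
      have h : (rot α β)⁻¹ q = (q.1 - α, q.2 - β) := rfl
      rw [h, ih ((q.1 - α, q.2 - β))]
      refine Prod.ext ?_ ?_ <;> simp [sub_zsmul, add_zsmul] <;> abel

lemma rot_continuous (α β : 𝕋) : Continuous ⇑(rot α β) := by
  have h : ⇑(rot α β) = fun p : 𝕋 × 𝕋 => (p.1 + α, p.2 + β) := rfl
  rw [h]
  exact (continuous_fst.add continuous_const).prodMk (continuous_snd.add continuous_const)

lemma rot_inv_continuous (α β : 𝕋) : Continuous ⇑(rot α β)⁻¹ := by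
  have h : ⇑(rot α β)⁻¹ = fun p : 𝕋 × 𝕋 => (p.1 - α, p.2 - β) := rfl
  rw [h]
  exact (continuous_fst.sub continuous_const).prodMk (continuous_snd.sub continuous_const)

/-- A probability measure invariant under a minimal rotation of `𝕋²` is the Haar measure. -/
lemma rot_invariant_eq_volume (α β : 𝕋)
    (hrotmin : ∀ p : 𝕋 × 𝕋, Dense (Set.range fun n : ℤ => ((rot α β) ^ n) p))
    (ν : Measure (𝕋 × 𝕋)) [IsProbabilityMeasure ν]
    (hν : ν.map ⇑(rot α β) = ν) : ν = volume := by
  apply dense_translate_eq_volume (Set.range fun n : ℤ => ((rot α β) ^ n) ((0 : 𝕋), (0 : 𝕋)))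
    (hrotmin ((0 : 𝕋), (0 : 𝕋))) ν
  rintro d ⟨n, rfl⟩
  have h1 : (fun x : 𝕋 × 𝕋 => x + (rot α β ^ n) ((0 : 𝕋), (0 : 𝕋))) = ⇑(rot α β ^ n) := by
    funext x
    rw [rot_zpow, rot_zpow]
    refine Prod.ext ?_ ?_ <;> simp
  rw [h1]
  exact perm_zpow_map_eq _ (rot_continuous α β).measurable (rot_inv_continuous α β).measurable
    ν hν n

lemma skew_zpow_fst (α : 𝕋) (u : 𝕋 → 𝕋) (n : ℤ) (q : 𝕋 × 𝕋) :
    ((skew α u ^ n) q).1 = q.1 + n • α := by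
  induction n using Int.induction_on generalizing q with
  | zero => simp
  | succ k ih =>
      rw [perm_zpow_succ, ih]
      have h : (skew α u q).1 = q.1 + α := rfl
      rw [h, add_zsmul]
      simp
      abel
  | pred k ih =>
      rw [perm_zpow_pred, ih]
      have h : ((skew α u)⁻¹ q).1 = q.1 - α := rfl
      rw [h, sub_zsmul]
      simp
      abel

lemma skew_vert (α : 𝕋) (u : 𝕋 → 𝕋) (t : 𝕋) (n : ℤ) (q : 𝕋 × 𝕋) :
    (skew α u ^ n) (q + ((0 : 𝕋), t)) = (skew α u ^ n) q + ((0 : 𝕋), t) := by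
  have hT : ∀ r : 𝕋 × 𝕋, skew α u (r + ((0 : 𝕋), t)) = skew α u r + ((0 : 𝕋), t) := by
    intro r
    show ((r.1 + 0) + α, (r.2 + t) + u (r.1 + 0)) = ((r.1 + α) + 0, (r.2 + u r.1) + t)
    refine Prod.ext ?_ ?_
    · simp
    · simp only [add_zero]; abel
  have hTi : ∀ r : 𝕋 × 𝕋, (skew α u)⁻¹ (r + ((0 : 𝕋), t)) = (skew α u)⁻¹ r + ((0 : 𝕋), t) := by
    intro r
    have h2 : skew α u ((skew α u)⁻¹ r + ((0 : 𝕋), t)) = r + ((0 : 𝕋), t) := by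
      rw [hT]; exact congrArg (· + ((0 : 𝕋), t)) ((skew α u).apply_symm_apply r)
    calc (skew α u)⁻¹ (r + ((0 : 𝕋), t))
        = (skew α u)⁻¹ (skew α u ((skew α u)⁻¹ r + ((0 : 𝕋), t))) := by rw [h2]
      _ = (skew α u)⁻¹ r + ((0 : 𝕋), t) := (skew α u).symm_apply_apply _
  induction n using Int.induction_on generalizing q with
  | zero => simp
  | succ k ih => rw [perm_zpow_succ, perm_zpow_succ, hT, ih]
  | pred k ih => rw [perm_zpow_pred, perm_zpow_pred, hTi, ih]
/-- Let `α, β ∈ 𝕋` be such that the rotation `R_{α,β}` of `𝕋²` is minimal,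
let `u : 𝕋 → 𝕋` be continuous with `u x = β + g (x + α) - g x` for a Borel measurable
`g : 𝕋 → 𝕋`, and let `T(x,y) = (x + α, y + u x)`.  Then: (i) the Haar measure `m` on `𝕋²`
is `T`-invariant; (ii) `φ(x, y) = (x, y - g x)` is a measure-preserving bijection of
`(𝕋², m)` with `φ ∘ T = R_{α,β} ∘ φ`, so `(𝕋², m, T)` is measurably isomorphic to
`(𝕋², m, R_{α,β})`; (iii) `(𝕋², T)` is uniquely ergodic with unique invariant measure `m`;
(iv) `(𝕋², T)` is minimal. -/
theorem skew_product_strictly_ergodic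
    (α β : 𝕋)
    (hrotmin : ∀ p : 𝕋 × 𝕋, Dense (Set.range fun n : ℤ => ((rot α β) ^ n) p))
    (u : 𝕋 → 𝕋) (hu : Continuous u)
    (g : 𝕋 → 𝕋) (hg : Measurable g)
    (hcob : ∀ x : 𝕋, u x = β + g (x + α) - g x) :
    -- (i) Haar measure on 𝕋² is T-invariant
    (volume : Measure (𝕋 × 𝕋)).map ⇑(skew α u) = volume ∧
    -- (ii) φ is a measure-preserving bijection conjugating T to the rotation R_{α,β}
    (Function.Bijective (fun p : 𝕋 × 𝕋 => (p.1, p.2 - g p.1)) ∧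
      (volume : Measure (𝕋 × 𝕋)).map (fun p : 𝕋 × 𝕋 => (p.1, p.2 - g p.1)) = volume ∧
      (fun p : 𝕋 × 𝕋 => (p.1, p.2 - g p.1)) ∘ ⇑(skew α u)
        = ⇑(rot α β) ∘ fun p : 𝕋 × 𝕋 => (p.1, p.2 - g p.1)) ∧
    -- (iii) unique ergodicity
    (∀ μ : Measure (𝕋 × 𝕋), IsProbabilityMeasure μ → μ.map ⇑(skew α u) = μ → μ = volume) ∧
    -- (iv) minimality
    (∀ p : 𝕋 × 𝕋, Dense (Set.range fun n : ℤ => ((skew α u) ^ n) p)) := by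
  have hTcoe : ⇑(skew α u) = fun p : 𝕋 × 𝕋 => (p.1 + α, p.2 + u p.1) := rfl
  have hTicoe : ⇑(skew α u)⁻¹ = fun p : 𝕋 × 𝕋 => (p.1 - α, p.2 - u (p.1 - α)) := rfl
  have hTc : Continuous ⇑(skew α u) := by
    rw [hTcoe]
    exact (continuous_fst.add continuous_const).prodMk (continuous_snd.add
      (hu.comp continuous_fst))
  have hTic : Continuous ⇑(skew α u)⁻¹ := by
    rw [hTicoe]
    exact (continuous_fst.sub continuous_const).prodMk (continuous_snd.sub
      (hu.comp (continuous_fst.sub continuous_const)))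
  have hTm : Measurable ⇑(skew α u) := hTc.measurable
  have hTim : Measurable ⇑(skew α u)⁻¹ := hTic.measurable
  -- (i)
  have hi : (volume : Measure (𝕋 × 𝕋)).map ⇑(skew α u) = volume := by
    rw [hTcoe]; exact (aux_mp α u hu.measurable).map_eq
  -- (ii) : the conjugation φ and its inverse ψ
  set φ : 𝕋 × 𝕋 → 𝕋 × 𝕋 := fun p => (p.1, p.2 - g p.1) with hφdef
  set ψ : 𝕋 × 𝕋 → 𝕋 × 𝕋 := fun p => (p.1, p.2 + g p.1) with hψdef
  have hφm : Measurable φ := measurable_fst.prodMk (measurable_snd.sub (hg.comp measurable_fst))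
  have hψm : Measurable ψ := measurable_fst.prodMk (measurable_snd.add (hg.comp measurable_fst))
  have hψφ : ψ ∘ φ = id := by
    funext p
    simp [hφdef, hψdef]
  have hφψ : φ ∘ ψ = id := by
    funext p
    simp [hφdef, hψdef]
  have hbij : Function.Bijective φ :=
    Function.bijective_iff_has_inverse.mpr ⟨ψ, fun p => congrFun hψφ p, fun p => congrFun hφψ p⟩
  have hφmp : (volume : Measure (𝕋 × 𝕋)).map φ = volume := (aux_mp_sub g hg).map_eq
  have hψmp : (volume : Measure (𝕋 × 𝕋)).map ψ = volume := (aux_mp_add g hg).map_eq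
  have hconj : φ ∘ ⇑(skew α u) = ⇑(rot α β) ∘ φ := by
    funext p
    show ((p.1 + α), (p.2 + u p.1) - g (p.1 + α)) = ((p.1 + α), (p.2 - g p.1) + β)
    refine Prod.ext rfl ?_
    rw [hcob p.1]
    abel
  -- (iii)
  have hiii : ∀ μ : Measure (𝕋 × 𝕋), IsProbabilityMeasure μ → μ.map ⇑(skew α u) = μ →
      μ = volume := by
    intro μ hprob hinvμ
    have hν : IsProbabilityMeasure (μ.map φ) := Measure.isProbabilityMeasure_map hφm.aemeasurable
    have hkey : (μ.map φ).map ⇑(rot α β) = μ.map φ := by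
      rw [Measure.map_map (rot_continuous α β).measurable hφm, ← hconj,
        ← Measure.map_map hφm hTm, hinvμ]
    have hvol := rot_invariant_eq_volume α β hrotmin (μ.map φ) hkey
    calc μ = (μ.map φ).map ψ := by
            rw [Measure.map_map hψm hφm, hψφ, Measure.map_id]
      _ = (volume : Measure (𝕋 × 𝕋)).map ψ := by rw [hvol]
      _ = volume := hψmp
  refine ⟨hi, ⟨hbij, hφmp, hconj⟩, hiii, ?_⟩
  -- (iv) minimality
  have hmeasn : ∀ n : ℤ, Measurable ⇑(skew α u ^ n) := perm_zpow_measurable _ hTm hTim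
  have hcontn : ∀ n : ℤ, Continuous ⇑(skew α u ^ n) := perm_zpow_continuous _ hTc hTic
  -- ergodicity of the Haar measure
  have herg : ∀ s : Set (𝕋 × 𝕋), MeasurableSet s → (⇑(skew α u)) ⁻¹' s = s →
      volume s = 0 ∨ volume s = 1 := by
    intro s hs hsinv
    by_contra hcon
    push_neg at hcon
    obtain ⟨h0, h1⟩ := hcon
    set μ : Measure (𝕋 × 𝕋) := (volume s)⁻¹ • volume.restrict s with hμdef
    have hfin : volume s ≠ ⊤ := measure_ne_top _ _
    have hμprob : IsProbabilityMeasure μ := by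
      constructor
      rw [hμdef, Measure.smul_apply, Measure.restrict_apply_univ, smul_eq_mul,
        ENNReal.inv_mul_cancel h0 hfin]
    have hμinv : μ.map ⇑(skew α u) = μ := by
      rw [hμdef, Measure.map_smul]
      congr 1
      ext E hE
      rw [Measure.map_apply hTm hE, Measure.restrict_apply (hTm hE), Measure.restrict_apply hE]
      have hpre : ⇑(skew α u) ⁻¹' E ∩ s = ⇑(skew α u) ⁻¹' (E ∩ s) := by
        rw [Set.preimage_inter, hsinv]
      rw [hpre, ← Measure.map_apply hTm (hE.inter hs), hi]
    have hμvol := hiii μ hμprob hμinv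
    have hμs : μ s = volume s := by rw [hμvol]
    rw [hμdef, Measure.smul_apply, Measure.restrict_apply hs, Set.inter_self, smul_eq_mul,
      ENNReal.inv_mul_cancel h0 hfin] at hμs
    exact h1 hμs.symm
  -- a point with dense orbit, via a countable basis
  obtain ⟨B, hBc, hBne, hBb⟩ := TopologicalSpace.exists_countable_basis (𝕋 × 𝕋)
  set A : Set (𝕋 × 𝕋) → Set (𝕋 × 𝕋) := fun U => ⋃ n : ℤ, ⇑(skew α u ^ n) ⁻¹' U with hAdef
  have hAmeas : ∀ U ∈ B, MeasurableSet (A U) := fun U hU =>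
    MeasurableSet.iUnion fun n => (hmeasn n) (hBb.isOpen hU).measurableSet
  have hAinv : ∀ U, ⇑(skew α u) ⁻¹' (A U) = A U := by
    intro U
    rw [hAdef]
    simp only [Set.preimage_iUnion]
    have h1 : ∀ n : ℤ, ⇑(skew α u) ⁻¹' (⇑(skew α u ^ n) ⁻¹' U) = ⇑(skew α u ^ (n + 1)) ⁻¹' U := by
      intro n
      ext x
      simp only [Set.mem_preimage]
      rw [← perm_zpow_succ]
    ext x
    simp only [Set.mem_iUnion, h1]
    constructor
    · rintro ⟨n, hn⟩; exact ⟨n + 1, hn⟩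
    · rintro ⟨n, hn⟩; exact ⟨n - 1, by rwa [sub_add_cancel]⟩
  have hA1 : ∀ U ∈ B, volume (A U) = 1 := by
    intro U hU
    rcases herg (A U) (hAmeas U hU) (hAinv U) with h | h
    · exfalso
      have hUA : U ⊆ A U := by
        intro x hx
        rw [hAdef]
        refine Set.mem_iUnion.mpr ⟨0, ?_⟩
        simpa using hx
      have hUne : U.Nonempty := by
        rcases Set.eq_empty_or_nonempty U with h' | h'
        · exact absurd (h' ▸ hU) hBne
        · exact h'
      exact (hBb.isOpen hU).measure_ne_zero volume hUne
        (le_antisymm (le_trans (measure_mono hUA) h.le) zero_le)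
    · exact h
  set Gd := ⋂ U ∈ B, A U with hGdef
  have hGc : volume Gdᶜ = 0 := by
    rw [hGdef, Set.compl_iInter₂]
    rw [measure_biUnion_null_iff hBc]
    intro U hU
    rw [measure_compl (hAmeas U hU) (measure_ne_top _ _), hA1 U hU, measure_univ, tsub_self]
  have hGne : Gd.Nonempty := by
    apply MeasureTheory.nonempty_of_measure_ne_zero (μ := (volume : Measure (𝕋 × 𝕋)))
    intro h
    have : (volume : Measure (𝕋 × 𝕋)) Set.univ = 0 := by
      rw [← Set.union_compl_self Gd]
      exact le_antisymm (le_trans (measure_union_le _ _) (by rw [h, hGc, add_zero])) zero_le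
    rw [measure_univ] at this
    exact one_ne_zero this
  obtain ⟨z, hz⟩ := hGne
  have hzdense : Dense (Set.range fun n : ℤ => (skew α u ^ n) z) := by
    rw [dense_iff_inter_open]
    intro V hV hVne
    obtain ⟨v, hvV⟩ := hVne
    obtain ⟨U, hUB, hvU, hUV⟩ := hBb.exists_subset_of_mem_open hvV hV
    have hzA : z ∈ A U := Set.mem_iInter₂.mp hz U hUB
    rw [hAdef] at hzA
    obtain ⟨n, hn⟩ := Set.mem_iUnion.mp hzA
    exact ⟨(skew α u ^ n) z, hUV hn, ⟨n, rfl⟩⟩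
  -- now an arbitrary point
  intro p
  set K := closure (Set.range fun n : ℤ => (skew α u ^ n) p) with hKdef
  have hKcl : IsClosed K := isClosed_closure
  have hKinv : ∀ w ∈ K, ∀ n : ℤ, (skew α u ^ n) w ∈ K := by
    intro w hw n
    have himg : ⇑(skew α u ^ n) '' (Set.range fun m : ℤ => (skew α u ^ m) p) ⊆
        Set.range fun m : ℤ => (skew α u ^ m) p := by
      rintro _ ⟨_, ⟨m, rfl⟩, rfl⟩
      exact ⟨n + m, by show (skew α u ^ (n + m)) p = _; rw [zpow_add]; rfl⟩
    have h1 : (skew α u ^ n) w ∈ ⇑(skew α u ^ n) '' K := ⟨w, hw, rfl⟩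
    have h2 := image_closure_subset_closure_image (f := ⇑(skew α u ^ n)) (hcontn n)
      (s := Set.range fun m : ℤ => (skew α u ^ m) p)
    exact closure_mono himg (h2 h1)
  have hporb : p ∈ K := subset_closure ⟨0, by simp⟩
  -- the first projection of K is everything
  have hfst : ∀ x : 𝕋, ∃ w ∈ K, w.1 = x := by
    have hS1cl : IsClosed (Prod.fst '' K) :=
      ((hKcl.isCompact).image continuous_fst).isClosed
    have hhor : Dense (Set.range fun n : ℤ => p.1 + n • α) := by
      rw [dense_iff_inter_open]
      intro W hW hWne
      have hWu : IsOpen (W ×ˢ (Set.univ : Set 𝕋)) := hW.prod isOpen_univ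
      have hWune : (W ×ˢ (Set.univ : Set 𝕋)).Nonempty := hWne.prod ⟨0, Set.mem_univ 0⟩
      obtain ⟨q, hq1, hq2⟩ := dense_iff_inter_open.mp (hrotmin (p.1, 0)) _ hWu hWune
      obtain ⟨n, rfl⟩ := hq2
      refine ⟨((rot α β ^ n) (p.1, 0)).1, hq1.1, ⟨n, ?_⟩⟩
      rw [rot_zpow]
    have hsub : Set.range (fun n : ℤ => p.1 + n • α) ⊆ Prod.fst '' K := by
      rintro _ ⟨n, rfl⟩
      exact ⟨(skew α u ^ n) p, hKinv p hporb n, skew_zpow_fst α u n p⟩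
    intro x
    have hx : x ∈ Prod.fst '' K := by
      have : closure (Set.range fun n : ℤ => p.1 + n • α) ⊆ Prod.fst '' K :=
        hS1cl.closure_subset_iff.mpr hsub
      rw [hhor.closure_eq] at this
      exact this (Set.mem_univ x)
    obtain ⟨w, hwK, hw1⟩ := hx
    exact ⟨w, hwK, hw1⟩
  obtain ⟨w, hwK, hw1⟩ := hfst z.1
  set t := w.2 - z.2 with htdef
  have hwz : w = z + ((0 : 𝕋), t) := by
    refine Prod.ext ?_ ?_
    · show w.1 = z.1 + 0
      rw [hw1, add_zero]
    · show w.2 = z.2 + (w.2 - z.2)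
      rw [add_sub_cancel]
  rw [dense_iff_inter_open]
  intro V hV hVne
  set V' := (fun q : 𝕋 × 𝕋 => q + ((0 : 𝕋), t)) ⁻¹' V with hV'def
  have hV'open : IsOpen V' := hV.preimage (continuous_id.add continuous_const)
  have hV'ne : V'.Nonempty := by
    obtain ⟨v, hv⟩ := hVne
    refine ⟨v - ((0 : 𝕋), t), ?_⟩
    rw [hV'def]
    simpa [sub_add_cancel] using hv
  obtain ⟨q, hqV', hqorb⟩ := dense_iff_inter_open.mp hzdense V' hV'open hV'ne
  obtain ⟨n, rfl⟩ := hqorb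
  have h1 : (skew α u ^ n) w = (skew α u ^ n) z + ((0 : 𝕋), t) := by
    rw [hwz, skew_vert]
  have h2 : (skew α u ^ n) w ∈ V := by
    rw [h1]
    exact hqV'
  have h3 : (skew α u ^ n) w ∈ K := hKinv w hwK n
  obtain ⟨y, hy⟩ := mem_closure_iff.mp h3 V hV h2
  exact ⟨y, hy⟩
end

section
/- Let 𝕋 = ℝ/ℤ, let α ∈ 𝕋 be irrational, and let u : 𝕋 → 𝕋 be continuous of degree zero, i.e. admitting a continuous lift ũ : 𝕋 → ℝ with u(x) = ũ(x) mod 1; set ρ = ∫_𝕋 ũ(x) dx. Let T : 𝕋² → 𝕋², T(x,y) = (x+α, y+u(x)), and assume (𝕋²,T) is minimal. If there exists x' ∈ 𝕋 with sup_{n≥1} |ũ(x') + ũ(x'+α) + … + ũ(x'+(n−1)α) − nρ| = +∞, then the regionally proximal relation of (𝕋²,T) is exactly the fibers of the first coordinate: RP^[1](𝕋²,T) = {((x,y₁),(x,y₂)) : x, y₁, y₂ ∈ 𝕋}. -/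
open MeasureTheory

/-- The regionally proximal relation (of order 1). -/
def RP1 {X : Type*} [MetricSpace X] (T : Equiv.Perm X) : Set (X × X) :=
  {p | ∀ δ : ℝ, 0 < δ → ∃ x' y' : X, ∃ n : ℤ,
    dist p.1 x' < δ ∧ dist p.2 y' < δ ∧ dist ((T ^ n) x') ((T ^ n) y') < δ}

namespace RPAux

lemma dist_coe_le (a b : ℝ) : dist ((a : ℝ) : 𝕋) ((b : ℝ) : 𝕋) ≤ |a - b| := by
  rw [dist_eq_norm]
  have h : ((a : ℝ) : 𝕋) - ((b : ℝ) : 𝕋) = (((a - b : ℝ)) : 𝕋) := by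
    rw [← QuotientAddGroup.mk_sub]
  rw [h, AddCircle.norm_eq]
  simpa using round_le (a - b) 0

lemma dist_add_right' {G : Type*} [SeminormedAddCommGroup G] (a b c : G) :
    dist (a + c) (b + c) = dist a b := by
  simp [dist_eq_norm, add_sub_add_right_eq_sub]

noncomputable def S (α : 𝕋) (ut : 𝕋 → ℝ) (n : ℕ) (a : 𝕋) : ℝ :=
  ∑ j ∈ Finset.range n, ut (a + j • α)

lemma S_add (α : 𝕋) (ut : 𝕋 → ℝ) (m n : ℕ) (a : 𝕋) :
    S α ut (m + n) a = S α ut m a + S α ut n (a + m • α) := by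
  unfold S
  rw [Finset.sum_range_add]
  congr 1
  refine Finset.sum_congr rfl fun j _ => ?_
  rw [add_nsmul, add_assoc]

lemma S_one (α : 𝕋) (ut : 𝕋 → ℝ) (a : 𝕋) : S α ut 1 a = ut a := by
  simp [S]

lemma S_continuous (α : 𝕋) {ut : 𝕋 → ℝ} (hut : Continuous ut) (n : ℕ) :
    Continuous (fun a => S α ut n a) := by
  unfold S
  exact continuous_finset_sum _ fun j _ => hut.comp (continuous_id.add continuous_const)

noncomputable def Sz (α : 𝕋) (ut : 𝕋 → ℝ) (n : ℤ) (a : 𝕋) : ℝ :=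
  if 0 ≤ n then S α ut n.toNat a else -S α ut (-n).toNat (a + n • α)

lemma Sz_natCast (α : 𝕋) (ut : 𝕋 → ℝ) (n : ℕ) (a : 𝕋) :
    Sz α ut (n : ℤ) a = S α ut n a := by
  simp [Sz]

lemma Sz_zero (α : 𝕋) (ut : 𝕋 → ℝ) (a : 𝕋) : Sz α ut 0 a = 0 := by
  simp [Sz, S]

lemma Sz_succ (α : 𝕋) (ut : 𝕋 → ℝ) (n : ℤ) (a : 𝕋) :
    Sz α ut (n + 1) a = Sz α ut n a + ut (a + n • α) := by
  rcases le_or_gt 0 n with hn | hn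
  · have h1 : (0 : ℤ) ≤ n + 1 := by omega
    have h2 : (n + 1).toNat = n.toNat + 1 := by omega
    simp only [Sz, if_pos hn, if_pos h1, h2]
    have h3 : (n.toNat : ℕ) • α = n • α := by
      rw [← natCast_zsmul, Int.toNat_of_nonneg hn]
    simp only [S, Finset.sum_range_succ, h3]
  · have hm : 1 ≤ (-n).toNat := by omega
    set m := (-n).toNat with hmdef
    have hb : a + n • α + α = a + (n + 1) • α := by
      rw [add_zsmul, one_zsmul, add_assoc]
    have hm' : 1 + (m - 1) = m := by omega
    have hsplit : S α ut m (a + n • α)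
        = ut (a + n • α) + S α ut (m - 1) (a + (n + 1) • α) := by
      have h := S_add α ut 1 (m - 1) (a + n • α)
      rw [hm', S_one, one_nsmul, hb] at h
      exact h
    have hLHS : Sz α ut (n + 1) a = -S α ut (m - 1) (a + (n + 1) • α) := by
      rcases eq_or_ne (n + 1) 0 with h0 | h0
      · have h1 : m - 1 = 0 := by omega
        rw [h0, Sz_zero, h1]
        simp [S]
      · have hneg : ¬ (0 ≤ n + 1) := by omega
        simp only [Sz, if_neg hneg]
        have : (-(n + 1)).toNat = m - 1 := by omega
        rw [this]
    rw [hLHS]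
    simp only [Sz, if_neg (not_le.mpr hn)]
    rw [hsplit]
    ring

lemma Sz_add (α : 𝕋) (ut : 𝕋 → ℝ) (m n : ℤ) (a : 𝕋) :
    Sz α ut (m + n) a = Sz α ut m a + Sz α ut n (a + m • α) := by
  induction n using Int.induction_on with
  | zero => simp [Sz_zero]
  | succ k ih =>
      have h1 : m + ((k : ℤ) + 1) = (m + k) + 1 := by ring
      rw [h1, Sz_succ, ih, Sz_succ]
      rw [add_zsmul, ← add_assoc, add_assoc (Sz α ut m a)]
  | pred k ih =>
      have h1 : m + (-(k : ℤ) - 1) = (m + (-k - 1)) := by ring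
      have h2 := Sz_succ α ut (m + (-k - 1)) a
      have h3 : m + (-k - 1) + 1 = m + -(k : ℤ) := by ring
      rw [h3] at h2
      have h4 := Sz_succ α ut (-(k:ℤ) - 1) (a + m • α)
      have h5 : -(k:ℤ) - 1 + 1 = -(k:ℤ) := by ring
      rw [h5] at h4
      rw [h1]
      have h6 : a + m • α + (-(k:ℤ) - 1) • α = a + (m + (-(k:ℤ) - 1)) • α := by
        rw [add_zsmul, add_assoc]
      rw [ih, h4] at h2
      rw [h6] at h2
      linarith

lemma Sz_continuous (α : 𝕋) {ut : 𝕋 → ℝ} (hut : Continuous ut) (n : ℤ) :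
    Continuous (fun a => Sz α ut n a) := by
  unfold Sz
  split
  · exact S_continuous α hut _
  · exact ((S_continuous α hut _).comp (continuous_id.add continuous_const)).neg

lemma ut_integrable {ut : 𝕋 → ℝ} (hut : Continuous ut) :
    Integrable ut (volume : Measure 𝕋) :=
  hut.integrable_of_hasCompactSupport (IsClosed.isCompact (isClosed_tsupport _))

lemma integral_S (α : 𝕋) {ut : 𝕋 → ℝ} (hut : Continuous ut) (n : ℕ) :
    ∫ x : 𝕋, S α ut n x = n * ∫ x : 𝕋, ut x := by
  unfold S
  rw [integral_finset_sum]
  · have : ∀ j ∈ Finset.range n, (∫ x : 𝕋, ut (x + j • α)) = ∫ x : 𝕋, ut x := by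
      intro j _
      exact integral_add_right_eq_self ut (j • α)
    rw [Finset.sum_congr rfl this]
    simp [Finset.sum_const]
  · intro j _
    exact ((ut_integrable hut).comp_add_right (j • α))

lemma integral_Sz (α : 𝕋) {ut : 𝕋 → ℝ} (hut : Continuous ut) (n : ℤ) :
    ∫ x : 𝕋, Sz α ut n x = n * ∫ x : 𝕋, ut x := by
  rcases le_or_gt 0 n with hn | hn
  · have h : ((n.toNat : ℤ)) = n := Int.toNat_of_nonneg hn
    simp only [Sz, if_pos hn]
    rw [integral_S α hut]
    congr 1
    exact_mod_cast congrArg (Int.cast : ℤ → ℝ) h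
  · simp only [Sz, if_neg (not_le.mpr hn)]
    rw [integral_neg]
    have h1 : (fun x : 𝕋 => S α ut (-n).toNat (x + n • α)) = fun x : 𝕋 => (S α ut (-n).toNat) (x + n • α) := rfl
    rw [h1, integral_add_right_eq_self (S α ut (-n).toNat) (n • α), integral_S α hut]
    have h : (((-n).toNat : ℤ)) = -n := Int.toNat_of_nonneg (by omega)
    have : (((-n).toNat : ℝ)) = -(n : ℝ) := by exact_mod_cast congrArg (Int.cast : ℤ → ℝ) h
    rw [this]
    ring

lemma exists_le_mean {f : 𝕋 → ℝ} (hf : Continuous f) :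
    ∃ z : 𝕋, f z ≤ ∫ x : 𝕋, f x := by
  by_contra h
  push_neg at h
  obtain ⟨z₀, -, hz₀⟩ := IsCompact.exists_isMinOn isCompact_univ
    (Set.univ_nonempty) hf.continuousOn
  have hvol : ((volume (Set.univ : Set 𝕋)).toReal) = 1 := by
    rw [AddCircle.measure_univ]; simp
  have hint : (∫ _x : 𝕋, f z₀) ≤ ∫ x : 𝕋, f x :=
    integral_mono (integrable_const _) (ut_integrable hf) (fun x => hz₀ (Set.mem_univ x))
  rw [integral_const, measureReal_def, hvol, one_smul] at hint
  exact absurd (lt_of_le_of_lt hint (h z₀)) (lt_irrefl _)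

lemma exists_mean_le {f : 𝕋 → ℝ} (hf : Continuous f) :
    ∃ z : 𝕋, (∫ x : 𝕋, f x) ≤ f z := by
  obtain ⟨z, hz⟩ := exists_le_mean hf.neg
  refine ⟨z, ?_⟩
  simp only [Pi.neg_apply, integral_neg] at hz
  linarith

lemma exists_eq_mean {f : 𝕋 → ℝ} (hf : Continuous f) :
    ∃ z : 𝕋, f z = ∫ x : 𝕋, f x := by
  obtain ⟨z₁, h₁⟩ := exists_le_mean hf
  obtain ⟨z₂, h₂⟩ := exists_mean_le hf
  exact intermediate_value_univ₂ hf continuous_const h₁ h₂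

lemma discrete_ivt {δ b : ℝ} (hδ : 0 < δ) :
    ∀ (N : ℕ) (g : ℕ → ℝ), (∀ j, |g (j+1) - g j| < δ) → g 0 ≤ b → b ≤ g N →
    ∃ j, |g j - b| < δ := by
  intro N
  induction N with
  | zero =>
      intro g _hs h0 hN
      exact ⟨0, by rw [abs_lt]; constructor <;> linarith⟩
  | succ N ih =>
      intro g hs h0 hN
      by_cases hb : b ≤ g N
      · exact ih g hs h0 hb
      · push_neg at hb
        refine ⟨N + 1, ?_⟩
        rw [abs_lt]
        constructor <;> linarith [(abs_lt.mp (hs N)).1, (abs_lt.mp (hs N)).2]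

section Skew

variable (α : 𝕋) (u : 𝕋 → 𝕋) (ut : 𝕋 → ℝ)
variable (hlift : ∀ x : 𝕋, u x = ((ut x : ℝ) : 𝕋))

include hlift

lemma skew_pow_nat : ∀ (n : ℕ) (a b : 𝕋),
    ((skew α u) ^ n) (a, b) = (a + n • α, b + ((S α ut n a : ℝ) : 𝕋)) := by
  intro n
  induction n with
  | zero => intro a b; simp [S]
  | succ n ih =>
      intro a b
      rw [pow_succ, Equiv.Perm.mul_apply]
      have hT : (skew α u) (a, b) = (a + α, b + u a) := rfl
      rw [hT, ih]
      refine Prod.ext ?_ ?_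
      · show a + α + n • α = a + (n + 1) • α
        rw [succ_nsmul, ← add_assoc, add_right_comm]
      · show b + u a + ((S α ut n (a + α) : ℝ) : 𝕋) = b + ((S α ut (n + 1) a : ℝ) : 𝕋)
        rw [hlift, add_assoc, ← QuotientAddGroup.mk_add]
        congr 2
        have h1 := S_add α ut 1 n a
        rw [S_one, one_nsmul] at h1
        rw [add_comm 1 n] at h1
        rw [h1]

lemma skew_zpow (n : ℤ) (a b : 𝕋) :
    ((skew α u) ^ n) (a, b) = (a + n • α, b + ((Sz α ut n a : ℝ) : 𝕋)) := by
  rcases n with m | m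
  · rw [Int.ofNat_eq_coe, zpow_natCast, skew_pow_nat α u ut hlift, Sz_natCast, natCast_zsmul]
  · rw [zpow_negSucc, Equiv.Perm.inv_def, Equiv.symm_apply_eq,
      skew_pow_nat α u ut hlift]
    have hn : (Int.negSucc m) = -((m : ℤ) + 1) := rfl
    refine Prod.ext ?_ ?_
    · show a = a + Int.negSucc m • α + (m + 1) • α
      have : ((m + 1 : ℕ)) • α = ((m + 1 : ℤ)) • α := by
        rw [← natCast_zsmul]; norm_num
      rw [add_assoc, this, ← add_zsmul, hn]
      have h0 : (-((m:ℤ) + 1) + ((m:ℤ) + 1)) = 0 := by ring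
      rw [h0, zero_zsmul, add_zero]
    · show b = b + ((Sz α ut (Int.negSucc m) a : ℝ) : 𝕋) + ((S α ut (m + 1) (a + Int.negSucc m • α) : ℝ) : 𝕋)
      rw [add_assoc, ← QuotientAddGroup.mk_add]
      have h2 : Sz α ut (Int.negSucc m) a + S α ut (m + 1) (a + Int.negSucc m • α) = 0 := by
        have h3 := Sz_add α ut (Int.negSucc m) ((m : ℤ) + 1) a
        have h4 : Int.negSucc m + ((m : ℤ) + 1) = 0 := by rw [hn]; ring
        rw [h4, Sz_zero] at h3
        have h5 : Sz α ut ((m : ℤ) + 1) (a + Int.negSucc m • α)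
            = S α ut (m + 1) (a + Int.negSucc m • α) := by
          have : ((m : ℤ) + 1) = ((m + 1 : ℕ) : ℤ) := by norm_num
          rw [this, Sz_natCast]
        rw [h5] at h3
        linarith
      rw [h2]
      simp

end Skew


lemma walk (α : 𝕋) (ut : 𝕋 → ℝ) {δ' : ℝ} (hδ' : 0 < δ') (a a' : 𝕋)
    (hstep : ∀ m : ℤ, |ut (a + m • α) - ut (a' + m • α)| < δ')
    (n : ℤ) (h1 : 1 ≤ Sz α ut n a - Sz α ut n a')
    {b : ℝ} (hb0 : 0 ≤ b) (hb1 : b ≤ 1) :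
    ∃ m : ℤ, |(Sz α ut m a - Sz α ut m a') - b| < δ' := by
  rcases le_or_gt 0 n with hn | hn
  · set g : ℕ → ℝ := fun j => Sz α ut (j : ℤ) a - Sz α ut (j : ℤ) a' with hg
    have hsteps : ∀ j : ℕ, |g (j + 1) - g j| < δ' := by
      intro j
      have ea := Sz_succ α ut (j : ℤ) a
      have ea' := Sz_succ α ut (j : ℤ) a'
      have h2 : g (j + 1) - g j = ut (a + (j : ℤ) • α) - ut (a' + (j : ℤ) • α) := by
        simp only [hg]
        push_cast
        rw [ea, ea']
        ring
      rw [h2]; exact hstep j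
    have hb0' : g 0 ≤ b := by simpa [hg, Sz_zero] using hb0
    have hbN : b ≤ g n.toNat := by
      have h3 : ((n.toNat : ℤ)) = n := Int.toNat_of_nonneg hn
      simp only [hg, h3]
      linarith
    obtain ⟨j, hj⟩ := discrete_ivt hδ' n.toNat g hsteps hb0' hbN
    exact ⟨(j : ℤ), by simpa [hg] using hj⟩
  · set g : ℕ → ℝ := fun j => Sz α ut (-(j : ℤ)) a - Sz α ut (-(j : ℤ)) a' with hg
    have hsteps : ∀ j : ℕ, |g (j + 1) - g j| < δ' := by
      intro j
      have ea := Sz_succ α ut (-((j : ℤ) + 1)) a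
      have ea' := Sz_succ α ut (-((j : ℤ) + 1)) a'
      have hcast : -((j : ℤ) + 1) + 1 = -(j : ℤ) := by ring
      rw [hcast] at ea ea'
      have h2 : g (j + 1) - g j
          = -(ut (a + (-((j : ℤ) + 1)) • α) - ut (a' + (-((j : ℤ) + 1)) • α)) := by
        simp only [hg]
        push_cast
        rw [ea, ea']
        ring
      rw [h2, abs_neg]; exact hstep _
    have hb0' : g 0 ≤ b := by simpa [hg, Sz_zero] using hb0
    have hbN : b ≤ g (-n).toNat := by
      have h3 : (((-n).toNat : ℤ)) = -n := Int.toNat_of_nonneg (by omega)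
      have h4 : -(((-n).toNat : ℤ)) = n := by omega
      simp only [hg, h4]
      linarith
    obtain ⟨j, hj⟩ := discrete_ivt hδ' (-n).toNat g hsteps hb0' hbN
    exact ⟨-(j : ℤ), by simpa [hg] using hj⟩

end RPAux

/-- Let `α ∈ 𝕋` be irrational, `u : 𝕋 → 𝕋` continuous of degree zero with
continuous lift `ũ : 𝕋 → ℝ`, and `ρ = ∫ ũ`.  Let `T(x,y) = (x + α, y + u x)` and assume
`(𝕋², T)` is minimal.  If there is `x' ∈ 𝕋` with
`sup_{n ≥ 1} |ũ(x') + ũ(x'+α) + … + ũ(x'+(n-1)α) - n ρ| = +∞`, then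
`RP^[1](𝕋², T) = {((x,y₁), (x,y₂)) : x, y₁, y₂ ∈ 𝕋}`. -/
theorem rp_of_unbounded_motion
    (α : 𝕋) (hα : ∀ q : ℚ, α ≠ ((q : ℝ) : 𝕋))
    (u : 𝕋 → 𝕋) (hu : Continuous u)
    (ut : 𝕋 → ℝ) (hut : Continuous ut) (hlift : ∀ x : 𝕋, u x = ((ut x : ℝ) : 𝕋))
    (hmin : ∀ p : 𝕋 × 𝕋, Dense (Set.range fun n : ℤ => ((skew α u) ^ n) p))
    (x' : 𝕋)
    (hunbdd : ∀ M : ℝ, ∃ n : ℕ, 1 ≤ n ∧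
      M < |(∑ j ∈ Finset.range n, ut (x' + j • α)) - (n : ℝ) * ∫ x : 𝕋, ut x|) :
    RP1 (skew α u) = {p : (𝕋 × 𝕋) × (𝕋 × 𝕋) | p.1.1 = p.2.1} := by
  classical
  -- base density of the rotation orbit
  have hbase : ∀ x w : 𝕋, ∀ ε : ℝ, 0 < ε → ∃ k : ℤ, dist w (x + k • α) < ε := by
    intro x w ε hε
    have hd := hmin (x, 0)
    rw [Metric.dense_iff] at hd
    obtain ⟨q, hq1, k, hk⟩ := hd (w, 0) ε hε
    refine ⟨k, ?_⟩
    have hq2 : dist (((skew α u) ^ k) (x, 0)) ((w, 0) : 𝕋 × 𝕋) < ε := by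
      rw [← hk] at hq1
      simpa [Metric.mem_ball] using hq1
    rw [RPAux.skew_zpow α u ut hlift, Prod.dist_eq] at hq2
    have h4 := le_max_left (dist (x + k • α) w)
      (dist ((0 : 𝕋) + ((RPAux.Sz α ut k x : ℝ) : 𝕋)) (0 : 𝕋))
    rw [dist_comm]
    exact lt_of_le_of_lt h4 hq2
  -- the oscillation lemma
  have osc : ∀ x : 𝕋, ∀ r : ℝ, 0 < r → ∃ a ∈ Metric.ball x r, ∃ a' ∈ Metric.ball x r,
      ∃ n : ℤ, 1 ≤ |RPAux.Sz α ut n a - RPAux.Sz α ut n a'| := by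
    intro x r hr
    by_contra hcon
    push_neg at hcon
    set M : ℕ := ⌈(8 : ℝ) / r⌉₊ + 1 with hM
    have hMpos : 0 < (M : ℝ) := by positivity
    have hMstep : 1 / (M : ℝ) < r / 8 := by
      rw [div_lt_div_iff₀ hMpos (by norm_num : (0 : ℝ) < 8)]
      have h8 : (8 : ℝ) / r < M := by
        calc (8 : ℝ) / r ≤ ⌈(8 : ℝ) / r⌉₊ := Nat.le_ceil _
        _ < M := by exact_mod_cast Nat.lt_succ_self _
      calc (1 : ℝ) * 8 = ((8 : ℝ) / r) * r := by field_simp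
      _ < M * r := mul_lt_mul_of_pos_right h8 hr
      _ = r * M := mul_comm _ _
    have key : ∀ n : ℤ, ∀ w w' : 𝕋,
        |RPAux.Sz α ut n w - RPAux.Sz α ut n w'| ≤ 2 * M := by
      intro n w w'
      obtain ⟨s, hsIco, hs⟩ := AddCircle.eq_coe_Ico w
      obtain ⟨sb, hsbIco, hsb⟩ := AddCircle.eq_coe_Ico (w' - w)
      set F : ℕ → ℝ := fun i => RPAux.Sz α ut n (((s + i * (sb / M) : ℝ)) : 𝕋) with hF
      have hstep : ∀ i : ℕ, |F i - F (i + 1)| ≤ 2 := by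
        intro i
        set w₁ : 𝕋 := (((s + i * (sb / M) : ℝ)) : 𝕋) with hw₁def
        set w₂ : 𝕋 := (((s + (i + 1 : ℕ) * (sb / M) : ℝ)) : 𝕋) with hw₂def
        have hd12 : dist w₁ w₂ < r / 8 := by
          refine lt_of_le_of_lt (RPAux.dist_coe_le _ _) ?_
          have h2 : (s + i * (sb / M)) - (s + (i + 1 : ℕ) * (sb / M)) = -(sb / M) := by
            push_cast; ring
          rw [h2, abs_neg, abs_of_nonneg (div_nonneg hsbIco.1 hMpos.le)]
          have h3 : sb / (M : ℝ) ≤ 1 / M :=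
            (div_le_div_iff_of_pos_right hMpos).mpr hsbIco.2.le
          exact lt_of_le_of_lt h3 hMstep
        obtain ⟨k, hk⟩ := hbase x w₁ (r / 8) (by positivity)
        have ha : w₁ - k • α ∈ Metric.ball x r := by
          rw [Metric.mem_ball]
          have e : dist (w₁ - k • α) x = dist w₁ (x + k • α) := by
            rw [← RPAux.dist_add_right' (w₁ - k • α) x (k • α), sub_add_cancel]
          rw [e]
          linarith
        have ha' : w₂ - k • α ∈ Metric.ball x r := by
          rw [Metric.mem_ball]
          have e : dist (w₂ - k • α) x = dist w₂ (x + k • α) := by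
            rw [← RPAux.dist_add_right' (w₂ - k • α) x (k • α), sub_add_cancel]
          rw [e]
          calc dist w₂ (x + k • α) ≤ dist w₂ w₁ + dist w₁ (x + k • α) := dist_triangle _ _ _
          _ < r / 8 + r / 8 := by rw [dist_comm w₂ w₁]; exact add_lt_add hd12 hk
          _ ≤ r := by linarith
        have e1 : RPAux.Sz α ut n w₁
            = RPAux.Sz α ut (k + n) (w₁ - k • α) - RPAux.Sz α ut k (w₁ - k • α) := by
          have h := RPAux.Sz_add α ut k n (w₁ - k • α)
          rw [sub_add_cancel] at h
          linarith
        have e2 : RPAux.Sz α ut n w₂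
            = RPAux.Sz α ut (k + n) (w₂ - k • α) - RPAux.Sz α ut k (w₂ - k • α) := by
          have h := RPAux.Sz_add α ut k n (w₂ - k • α)
          rw [sub_add_cancel] at h
          linarith
        have hcon1 := hcon _ ha _ ha' (k + n)
        have hcon2 := hcon _ ha _ ha' k
        have hFi : F i = RPAux.Sz α ut n w₁ := rfl
        have hFi1 : F (i + 1) = RPAux.Sz α ut n w₂ := rfl
        rw [hFi, hFi1, e1, e2]
        calc |RPAux.Sz α ut (k + n) (w₁ - k • α) - RPAux.Sz α ut k (w₁ - k • α)
              - (RPAux.Sz α ut (k + n) (w₂ - k • α) - RPAux.Sz α ut k (w₂ - k • α))|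
            ≤ |RPAux.Sz α ut (k + n) (w₁ - k • α) - RPAux.Sz α ut (k + n) (w₂ - k • α)|
              + |RPAux.Sz α ut k (w₁ - k • α) - RPAux.Sz α ut k (w₂ - k • α)| := by
              have hid : RPAux.Sz α ut (k + n) (w₁ - k • α) - RPAux.Sz α ut k (w₁ - k • α)
                  - (RPAux.Sz α ut (k + n) (w₂ - k • α) - RPAux.Sz α ut k (w₂ - k • α))
                  = (RPAux.Sz α ut (k + n) (w₁ - k • α) - RPAux.Sz α ut (k + n) (w₂ - k • α))
                    - (RPAux.Sz α ut k (w₁ - k • α) - RPAux.Sz α ut k (w₂ - k • α)) := by ring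
              rw [hid, sub_eq_add_neg]
              refine (abs_add_le _ _).trans ?_
              rw [abs_neg]
        _ ≤ 1 + 1 := add_le_add hcon1.le hcon2.le
        _ = 2 := by norm_num
      have htel : ∀ i : ℕ, |F 0 - F i| ≤ 2 * i := by
        intro i
        induction i with
        | zero => simp
        | succ i ih =>
            calc |F 0 - F (i + 1)| ≤ |F 0 - F i| + |F i - F (i + 1)| := abs_sub_le _ _ _
            _ ≤ 2 * i + 2 := add_le_add ih (hstep i)
            _ = 2 * ((i : ℝ) + 1) := by ring
            _ = 2 * ((i + 1 : ℕ) : ℝ) := by push_cast; ring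
      have hF0 : F 0 = RPAux.Sz α ut n w := by
        have h0 : ((s + (0 : ℕ) * (sb / M) : ℝ)) = s := by push_cast; ring
        simp only [hF, h0, hs]
      have hFM : F M = RPAux.Sz α ut n w' := by
        have h0 : ((s + (M : ℕ) * (sb / M) : ℝ)) = s + sb := by
          field_simp
        simp only [hF, h0]
        have h1 : ((s + sb : ℝ) : 𝕋) = w' := by
          rw [QuotientAddGroup.mk_add, hs, hsb, add_sub_cancel]
        rw [h1]
      rw [← hF0, ← hFM]
      exact htel M
    obtain ⟨n, hn1, hn2⟩ := hunbdd (2 * M)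
    obtain ⟨z, hz⟩ := RPAux.exists_eq_mean (RPAux.Sz_continuous α hut (n : ℤ))
    rw [RPAux.integral_Sz α hut] at hz
    have h3 : |RPAux.Sz α ut (n : ℤ) x' - RPAux.Sz α ut (n : ℤ) z| ≤ 2 * M := key _ _ _
    rw [hz, RPAux.Sz_natCast] at h3
    have h4 : RPAux.S α ut n x' = ∑ j ∈ Finset.range n, ut (x' + j • α) := rfl
    rw [h4] at h3
    have h5 : (((n : ℤ) : ℝ)) = (n : ℝ) := by norm_num
    rw [h5] at h3
    exact absurd (lt_of_lt_of_le hn2 h3) (lt_irrefl _)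
  -- now the set equality
  ext p
  obtain ⟨⟨x, y₁⟩, x₂, y₂⟩ := p
  simp only [Set.mem_setOf_eq]
  constructor
  · intro hrp
    by_contra hne
    have hdpos : 0 < dist x x₂ := dist_pos.mpr hne
    obtain ⟨⟨a₁, b₁⟩, ⟨a₂, b₂⟩, n, h1, h2, h3⟩ := hrp (dist x x₂ / 3) (by positivity)
    have e1 : dist x a₁ < dist x x₂ / 3 := by
      refine lt_of_le_of_lt ?_ h1
      rw [Prod.dist_eq]; exact le_max_left _ _
    have e2 : dist x₂ a₂ < dist x x₂ / 3 := by
      refine lt_of_le_of_lt ?_ h2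
      rw [Prod.dist_eq]; exact le_max_left _ _
    have e3 : dist a₁ a₂ < dist x x₂ / 3 := by
      rw [RPAux.skew_zpow α u ut hlift, RPAux.skew_zpow α u ut hlift, Prod.dist_eq] at h3
      have h4 := le_max_left (dist (a₁ + n • α) (a₂ + n • α))
        (dist (b₁ + ((RPAux.Sz α ut n a₁ : ℝ) : 𝕋)) (b₂ + ((RPAux.Sz α ut n a₂ : ℝ) : 𝕋)))
      have h5 := lt_of_le_of_lt h4 h3
      rwa [RPAux.dist_add_right'] at h5
    have h6 : dist x x₂ ≤ dist x a₁ + dist a₁ a₂ + dist a₂ x₂ := dist_triangle4 _ _ _ _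
    rw [dist_comm a₂ x₂] at h6
    linarith
  · intro hx
    subst hx
    intro δ hδ
    obtain ⟨b, hbIco, hb⟩ := AddCircle.eq_coe_Ico (y₂ - y₁)
    have hmin01 : 0 < min δ 1 := lt_min hδ one_pos
    set δ' : ℝ := min δ 1 / 2 with hδ'def
    have hδ1 : 0 < δ' := by positivity
    have hutu : UniformContinuous ut := CompactSpace.uniformContinuous_of_continuous hut
    obtain ⟨η, hη, hηs⟩ := Metric.uniformContinuous_iff.mp hutu δ' hδ1
    set r : ℝ := min δ η / 2 with hrdef
    have hminδη : 0 < min δ η := lt_min hδ hη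
    have hr : 0 < r := by positivity
    have construct : ∀ a a' : 𝕋, a ∈ Metric.ball x r → a' ∈ Metric.ball x r → ∀ n : ℤ,
        1 ≤ RPAux.Sz α ut n a - RPAux.Sz α ut n a' →
        ∃ p' q' : 𝕋 × 𝕋, ∃ m : ℤ, dist ((x, y₁) : 𝕋 × 𝕋) p' < δ ∧
          dist ((x, y₂) : 𝕋 × 𝕋) q' < δ ∧
          dist (((skew α u) ^ m) p') (((skew α u) ^ m) q') < δ := by
      intro a a' ha ha' n h1
      have hdaa2 : dist a a' < min δ η := by
        have h2 : dist a a' ≤ dist a x + dist x a' := dist_triangle _ _ _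
        rw [Metric.mem_ball] at ha ha'
        rw [dist_comm x a'] at h2
        calc dist a a' ≤ dist a x + dist a' x := h2
        _ < r + r := add_lt_add ha ha'
        _ = min δ η := by rw [hrdef]; ring
      have hdaaE : dist a a' < η := lt_of_lt_of_le hdaa2 (min_le_right _ _)
      have hstepm : ∀ m : ℤ, |ut (a + m • α) - ut (a' + m • α)| < δ' := by
        intro m
        have hd : dist (a + m • α) (a' + m • α) < η := by
          rw [RPAux.dist_add_right']; exact hdaaE
        have := hηs hd
        rwa [Real.dist_eq] at this
      obtain ⟨m, hm⟩ := RPAux.walk α ut hδ1 a a' hstepm n h1 hbIco.1 hbIco.2.le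
      set t : ℝ := RPAux.Sz α ut m a - RPAux.Sz α ut m a' with ht
      refine ⟨(a, y₁), (a', y₁ + ((t : ℝ) : 𝕋)), m, ?_, ?_, ?_⟩
      · rw [Prod.dist_eq]
        apply max_lt
        · rw [dist_comm]
          rw [Metric.mem_ball] at ha
          calc dist a x < r := ha
          _ ≤ δ := by
            rw [hrdef]
            have := min_le_left δ η
            linarith
        · simpa using hδ
      · rw [Prod.dist_eq]
        apply max_lt
        · rw [dist_comm]
          rw [Metric.mem_ball] at ha'
          calc dist a' x < r := ha'
          _ ≤ δ := by
            rw [hrdef]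
            have := min_le_left δ η
            linarith
        · have hy₂ : y₂ = y₁ + (y₂ - y₁) := by abel
          calc dist y₂ (y₁ + ((t : ℝ) : 𝕋)) = dist (y₁ + (y₂ - y₁)) (y₁ + ((t : ℝ) : 𝕋)) := by
                rw [← hy₂]
          _ = dist (y₂ - y₁) ((t : ℝ) : 𝕋) := by
                rw [add_comm y₁ (y₂ - y₁), add_comm y₁ ((t : ℝ) : 𝕋), RPAux.dist_add_right']
          _ = dist ((b : ℝ) : 𝕋) ((t : ℝ) : 𝕋) := by rw [hb]
          _ ≤ |b - t| := RPAux.dist_coe_le _ _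
          _ = |t - b| := abs_sub_comm _ _
          _ < δ' := hm
          _ ≤ δ := by
            rw [hδ'def]
            have := min_le_left δ 1
            linarith
      · rw [RPAux.skew_zpow α u ut hlift, RPAux.skew_zpow α u ut hlift, Prod.dist_eq]
        apply max_lt
        · rw [RPAux.dist_add_right']
          exact lt_of_lt_of_le hdaa2 (min_le_left _ _)
        · have he : y₁ + ((t : ℝ) : 𝕋) + ((RPAux.Sz α ut m a' : ℝ) : 𝕋)
              = y₁ + ((RPAux.Sz α ut m a : ℝ) : 𝕋) := by
            rw [add_assoc, ← QuotientAddGroup.mk_add]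
            congr 2
            rw [ht]; ring
          rw [he]
          simpa using hδ
    obtain ⟨a, ha, a', ha', n, hosc⟩ := osc x r hr
    rcases le_abs.mp hosc with h | h
    · obtain ⟨p', q', m, c1, c2, c3⟩ := construct a a' ha ha' n (by linarith)
      exact ⟨p', q', m, c1, c2, c3⟩
    · obtain ⟨p', q', m, c1, c2, c3⟩ := construct a' a ha' ha n (by linarith)
      exact ⟨p', q', m, c1, c2, c3⟩
end
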